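/- arXiv:2108.06406 — 5 statements merged into one kernel-verified Lean document; each statement's English description precedes it below -/
import Mathlib

section
/- Let (X,Σ,μ) be a localizable measure space and M = L∞(X,Σ,μ). A weight ω on M₊ is completely additive if and only if ω is normal. -/
open MeasureTheory ENNReal NNReal Set Filter

noncomputable section

namespace Paper

variable {X : Type} [MeasurableSpace X]

/-- A measure is *semifinite* if every measurable set of infinite measure has a measurable
subset of strictly positive finite measure. -/
def Semifinite (μ : Measure X) : Prop :=
  ∀ E, MeasurableSet E → μ E = ∞ →
    ∃ F, MeasurableSet F ∧ F ⊆ E ∧ 0 < μ F ∧ μ F < ∞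

/-- A measure space is *Dedekind* if every family of measurable sets has an essential
supremum. -/
def Dedekind (μ : Measure X) : Prop :=
  ∀ 𝒞 : Set (Set X), (∀ C ∈ 𝒞, MeasurableSet C) →
    ∃ S, MeasurableSet S ∧ (∀ C ∈ 𝒞, μ (C \ S) = 0) ∧
      ∀ T, MeasurableSet T → (∀ C ∈ 𝒞, μ (C \ T) = 0) → μ (S \ T) = 0

/-- A measure space is *localizable* if it is semifinite and Dedekind. -/
def Localizable (μ : Measure X) : Prop := Semifinite μ ∧ Dedekind μ

/-- A measure space is *dualizable* if the canonical map `L∞ → (L¹)*`,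
`f ↦ (g ↦ ∫ f g dμ)`, is an isometric isomorphism: it is norm-preserving (the operator
norm of the induced functional is `‖f‖`) and every continuous functional on `L¹` arises
this way. -/
def Dualizable (μ : Measure X) : Prop :=
  (∀ f : Lp ℝ ∞ μ,
    ‖f‖ = sSup ((fun g : Lp ℝ 1 μ => |∫ x, f x * g x ∂μ|) '' {g | ‖g‖ ≤ 1})) ∧
  (∀ φ : Lp ℝ 1 μ →L[ℝ] ℝ, ∃ f : Lp ℝ ∞ μ, ∀ g : Lp ℝ 1 μ, φ g = ∫ x, f x * g x ∂μ)

/-- A *weight* on `L∞(μ)₊`: an additive, `[0,∞]`-positively-homogeneous map on the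
positive cone, with values in `[0,∞]`. -/
def IsWeight (μ : Measure X) (ω : Lp ℝ ∞ μ → ℝ≥0∞) : Prop :=
  (∀ f g : Lp ℝ ∞ μ, 0 ≤ f → 0 ≤ g → ω (f + g) = ω f + ω g) ∧
  (∀ (t : ℝ≥0) (f : Lp ℝ ∞ μ), 0 ≤ f → ω ((t : ℝ) • f) = (t : ℝ≥0∞) * ω f)

/-- A weight is *normal* if it preserves suprema of increasing nets (equivalently,
upward-directed sets) of positive elements possessing a supremum. -/
def NormalWeight (μ : Measure X) (ω : Lp ℝ ∞ μ → ℝ≥0∞) : Prop :=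
  ∀ s : Set (Lp ℝ ∞ μ), s.Nonempty → DirectedOn (· ≤ ·) s → (∀ f ∈ s, 0 ≤ f) →
    ∀ g, IsLUB s g → ω g = ⨆ f ∈ s, ω f

/-- A weight is *completely additive* if `ω f = ∑ᵢ ω fᵢ` whenever `(fᵢ)` is a family of
positive elements whose finite partial sums are uniformly bounded and have supremum `f`. -/
def CompletelyAdditiveWeight (μ : Measure X) (ω : Lp ℝ ∞ μ → ℝ≥0∞) : Prop :=
  ∀ (ι : Type) (f : ι → Lp ℝ ∞ μ), (∀ i, 0 ≤ f i) →
    (∃ C : ℝ, ∀ J : Finset ι, ‖∑ i ∈ J, f i‖ ≤ C) →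
    ∀ g, IsLUB (Set.range fun J : Finset ι => ∑ i ∈ J, f i) g →
      ω g = ∑' i, ω (f i)

/-- A weight is *countably additive* (equivalently, σ-normal) if the above holds for
countable families. -/
def CountablyAdditiveWeight (μ : Measure X) (ω : Lp ℝ ∞ μ → ℝ≥0∞) : Prop :=
  ∀ f : ℕ → Lp ℝ ∞ μ, (∀ i, 0 ≤ f i) →
    (∃ C : ℝ, ∀ J : Finset ℕ, ‖∑ i ∈ J, f i‖ ≤ C) →
    ∀ g, IsLUB (Set.range fun J : Finset ℕ => ∑ i ∈ J, f i) g →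
      ω g = ∑' i, ω (f i)

/-- For a measure `ν` (intended: `ν ≪ μ`), the weight `ψ_ν(f) = ∫ f dν` on `L∞(μ)₊`. -/
def psiW (μ ν : Measure X) (f : Lp ℝ ∞ μ) : ℝ≥0∞ := ∫⁻ x, ENNReal.ofReal (f x) ∂ν

/-- A projection in `L∞(μ)`: the a.e.-class of the indicator function of a measurable set. -/
def IsProjection (μ : Measure X) (p : Lp ℝ ∞ μ) : Prop :=
  ∃ E, MeasurableSet E ∧ (p : X → ℝ) =ᵐ[μ] E.indicator 1

/-- A weight is *semifinite* if every projection of infinite weight dominates a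
projection of strictly positive finite weight. -/
def SemifiniteWeight (μ : Measure X) (ω : Lp ℝ ∞ μ → ℝ≥0∞) : Prop :=
  ∀ p, IsProjection μ p → ω p = ∞ →
    ∃ q, IsProjection μ q ∧ q ≤ p ∧ 0 < ω q ∧ ω q < ∞

/-- A weight is *faithful* if it vanishes only at `0` among positive elements. -/
def FaithfulWeight (μ : Measure X) (ω : Lp ℝ ∞ μ → ℝ≥0∞) : Prop :=
  ∀ f : Lp ℝ ∞ μ, 0 ≤ f → ω f = 0 → f = 0

/-- `ν` has *μ-support* `E₀`. -/
def HasMuSupport (μ ν : Measure X) : Prop :=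
  ∃ E₀, MeasurableSet E₀ ∧ (∀ E, MeasurableSet E → ν E = ν (E ∩ E₀)) ∧
    ∀ E, MeasurableSet E → E ⊆ E₀ → 0 < μ E → 0 < ν E

/-- `ν` is *μ-semifinite*. -/
def MuSemifinite (μ ν : Measure X) : Prop :=
  ∀ E, MeasurableSet E → 0 < ν E →
    ∃ F, MeasurableSet F ∧ F ⊆ E ∧ μ F < ∞ ∧ 0 < ν F

/-- `ν` is *strongly μ-semifinite*. -/
def StronglyMuSemifinite (μ ν : Measure X) : Prop :=
  ∀ E, MeasurableSet E → 0 < ν E →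
    ∃ F, MeasurableSet F ∧ F ⊆ E ∧ μ F < ∞ ∧ 0 < ν F ∧ ν F < ∞

end Paper

open Paper

section AuxWeight

open MeasureTheory

variable {X : Type} [MeasurableSpace X] {μ : MeasureTheory.Measure X}
  {ω : MeasureTheory.Lp ℝ ∞ μ → ℝ≥0∞}

lemma omega_zero (hω : IsWeight μ ω) : ω 0 = 0 := by
  have h := hω.2 0 0 le_rfl
  simpa using h

lemma omega_mono (hω : IsWeight μ ω) {f g : Lp ℝ ∞ μ} (hf : 0 ≤ f) (hfg : f ≤ g) :
    ω f ≤ ω g := by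
  have h : f + (g - f) = g := by abel
  calc ω f ≤ ω f + ω (g - f) := le_self_add
  _ = ω g := by rw [← hω.1 f (g - f) hf (sub_nonneg.2 hfg), h]

lemma omega_sum (hω : IsWeight μ ω) {ι : Type} (f : ι → Lp ℝ ∞ μ)
    (hf : ∀ i, 0 ≤ f i) (J : Finset ι) :
    ω (∑ i ∈ J, f i) = ∑ i ∈ J, ω (f i) := by
  classical
  induction J using Finset.cons_induction with
  | empty => simpa using omega_zero hω
  | cons a J ha ih =>
    rw [Finset.sum_cons, hω.1 _ _ (hf a) (Finset.sum_nonneg fun i _ => hf i), ih,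
      Finset.sum_cons]

lemma directed_finset_le {L : Type*} [Preorder L] {s : Set L} (hne : s.Nonempty)
    (hdir : DirectedOn (· ≤ ·) s) {ι : Type} (v : ι → L) (J : Finset ι)
    (hv : ∀ i ∈ J, v i ∈ s) : ∃ f ∈ s, ∀ i ∈ J, v i ≤ f := by
  classical
  induction J using Finset.cons_induction with
  | empty =>
    obtain ⟨f, hf⟩ := hne
    exact ⟨f, hf, by simp⟩
  | cons a J ha ih =>
    obtain ⟨f, hfs, hf⟩ := ih (fun i hi => hv i (Finset.mem_cons_of_mem hi))
    obtain ⟨f', hf's, hle1, hle2⟩ := hdir f hfs (v a) (hv a (Finset.mem_cons_self a J))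
    refine ⟨f', hf's, fun i hi => ?_⟩
    rcases Finset.mem_cons.1 hi with rfl | hi
    · exact hle2
    · exact (hf i hi).trans hle1

lemma ae_finset_ball {ι : Type} (J : Finset ι) {p : X → ι → Prop}
    (h : ∀ i ∈ J, ∀ᵐ x ∂μ, p x i) : ∀ᵐ x ∂μ, ∀ i ∈ J, p x i := by
  classical
  induction J using Finset.cons_induction with
  | empty => exact Filter.Eventually.of_forall (by simp)
  | cons a J ha ih =>
    filter_upwards [h a (Finset.mem_cons_self a J),
      ih fun i hi => h i (Finset.mem_cons_of_mem hi)] with x h1 h2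
    intro i hi
    rcases Finset.mem_cons.1 hi with rfl | hi
    · exact h1
    · exact h2 i hi

lemma Lp_coeFn_sum {ι : Type} (f : ι → Lp ℝ ∞ μ) (J : Finset ι) :
    (↑↑(∑ i ∈ J, f i) : X → ℝ) =ᵐ[μ] fun x => ∑ i ∈ J, (f i : X → ℝ) x := by
  classical
  induction J using Finset.cons_induction with
  | empty =>
    simp only [Finset.sum_empty]
    filter_upwards [MeasureTheory.Lp.coeFn_zero ℝ ∞ μ] with x hx
    simpa using hx
  | cons a J ha ih =>
    rw [Finset.sum_cons]
    filter_upwards [MeasureTheory.Lp.coeFn_add (f a) (∑ i ∈ J, f i), ih] with x h1 h2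
    simp only [Finset.sum_cons, h1, Pi.add_apply, h2]

end AuxWeight


/-- Let `(X,Σ,μ)` be a localizable measure space and `M = L∞(X,Σ,μ)`.
A weight `ω` on `M₊` is completely additive if and only if `ω` is normal. -/
theorem weight_completelyAdditive_iff_normal
    {X : Type} [MeasurableSpace X] (μ : MeasureTheory.Measure X)
    (hμ : Localizable μ) (ω : MeasureTheory.Lp ℝ ∞ μ → ENNReal) (hω : IsWeight μ ω) :
    CompletelyAdditiveWeight μ ω ↔ NormalWeight μ ω := by
  classical
  constructor
  · -- completely additive → normal
    intro hCA s hne hdir hnn g hlub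
    have hg0 : 0 ≤ g := by
      obtain ⟨f₀, hf₀⟩ := hne
      exact le_trans (hnn f₀ hf₀) (hlub.1 hf₀)
    refine le_antisymm ?_ (iSup₂_le fun f hf => omega_mono hω (hnn f hf) (hlub.1 hf))
    refine ENNReal.le_of_forall_lt_one_mul_le fun a ha => ?_
    lift a to ℝ≥0 using ne_top_of_lt (ha.trans_le le_top)
    rw [← hω.2 a g hg0]
    by_cases hc00 : a = 0
    · subst hc00
      simp only [NNReal.coe_zero, zero_smul]
      rw [omega_zero hω]
      exact zero_le
    have ha1 : a < 1 := by exact_mod_cast ha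
    have hc0' : (0:ℝ) < (a:ℝ) := by exact_mod_cast pos_iff_ne_zero.2 hc00
    have hc1' : (a:ℝ) < 1 := by exact_mod_cast ha1
    set c : ℝ := (a : ℝ) with hcdef
    set cg : MeasureTheory.Lp ℝ ∞ μ := c • g with hcgdef
    -- basic a.e. facts
    have hgcoe0 : ∀ᵐ x ∂μ, 0 ≤ (g : X → ℝ) x := (MeasureTheory.Lp.coeFn_nonneg g).2 hg0
    have hcg_coe : (cg : X → ℝ) =ᵐ[μ] fun x => c * (g : X → ℝ) x := by
      filter_upwards [MeasureTheory.Lp.coeFn_smul c g] with x hx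
      simpa [smul_eq_mul] using hx
    have hcg_nonneg_ae : ∀ᵐ x ∂μ, 0 ≤ (cg : X → ℝ) x := by
      filter_upwards [hcg_coe, hgcoe0] with x h1 h2
      rw [h1]
      exact mul_nonneg hc0'.le h2
    have hcg0 : 0 ≤ cg := (MeasureTheory.Lp.coeFn_nonneg cg).1 hcg_nonneg_ae
    -- the collection of admissible families of sets
    set P : Set X → Prop := fun A => MeasurableSet A ∧
      ∃ f ∈ s, ∀ᵐ x ∂μ, x ∈ A → c * (g : X → ℝ) x ≤ (f : X → ℝ) x with hPdef
    set 𝒮 : Set (Set (Set X)) :=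
      {𝒜 | (∀ A ∈ 𝒜, P A) ∧ 𝒜.Pairwise fun A B => μ (A ∩ B) = 0} with h𝒮def
    have hchain : ∀ C ⊆ 𝒮, IsChain (· ⊆ ·) C → ∃ ub ∈ 𝒮, ∀ t ∈ C, t ⊆ ub := by
      intro C hC hch
      refine ⟨⋃₀ C, ⟨?_, ?_⟩, fun t ht => Set.subset_sUnion_of_mem ht⟩
      · rintro A ⟨𝒜, h𝒜C, hA⟩
        exact (hC h𝒜C).1 A hA
      · rintro A ⟨𝒜₁, h1, hA1⟩ B ⟨𝒜₂, h2, hB2⟩ hAB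
        rcases hch.total h1 h2 with h | h
        · exact (hC h2).2 (h hA1) hB2 hAB
        · exact (hC h1).2 hA1 (h hB2) hAB
    obtain ⟨𝒜, h𝒜⟩ := zorn_subset 𝒮 hchain
    have h𝒜P : ∀ A ∈ 𝒜, P A := h𝒜.1.1
    have h𝒜pw : 𝒜.Pairwise fun A B => μ (A ∩ B) = 0 := h𝒜.1.2
    have hmeasA : ∀ A : ↥𝒜, MeasurableSet (A : Set X) := fun A => (h𝒜P A A.2).1
    -- the family of indicator pieces
    set e : ↥𝒜 → MeasureTheory.Lp ℝ ∞ μ := fun A =>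
      MeasureTheory.MemLp.toLp ((A : Set X).indicator (cg : X → ℝ))
        ((MeasureTheory.Lp.memLp cg).indicator (hmeasA A)) with hedef
    have hecoe : ∀ A : ↥𝒜, (e A : X → ℝ) =ᵐ[μ] (A : Set X).indicator (cg : X → ℝ) :=
      fun A => MeasureTheory.MemLp.coeFn_toLp _
    have he0 : ∀ A : ↥𝒜, 0 ≤ e A := by
      intro A
      rw [← MeasureTheory.Lp.coeFn_nonneg]
      filter_upwards [hecoe A, hcg_nonneg_ae] with x h1 h2
      rw [Pi.zero_apply, h1]
      by_cases hx : x ∈ (A : Set X)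
      · rw [Set.indicator_of_mem hx]; exact h2
      · rw [Set.indicator_of_notMem hx]
    -- key pointwise bound for finite partial sums
    have key : ∀ (J : Finset ↥𝒜) (φ : X → ℝ),
        (∀ᵐ x ∂μ, 0 ≤ φ x) →
        (∀ A : ↥𝒜, A ∈ J → ∀ᵐ x ∂μ, x ∈ (A : Set X) → c * (g : X → ℝ) x ≤ φ x) →
        ∀ᵐ x ∂μ, (↑↑(∑ A ∈ J, e A) : X → ℝ) x ≤ φ x := by
      intro J φ hφ0 hφA
      have hpair : ∀ᵐ x ∂μ, ∀ A ∈ J, ∀ B ∈ J, A ≠ B →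
          x ∉ (A : Set X) ∩ (B : Set X) := by
        refine ae_finset_ball J fun A hA => ae_finset_ball J fun B hB => ?_
        by_cases hAB : A = B
        · exact Filter.Eventually.of_forall fun x h => absurd hAB h
        · have hnull : μ ((A : Set X) ∩ (B : Set X)) = 0 :=
            h𝒜pw A.2 B.2 (fun hAB' => hAB (Subtype.ext hAB'))
          filter_upwards [measure_eq_zero_iff_ae_notMem.1 hnull] with x hx _
          exact hx
      have hφAall : ∀ᵐ x ∂μ, ∀ A ∈ J,
          (x ∈ (A : Set X) → c * (g : X → ℝ) x ≤ φ x) :=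
        ae_finset_ball J hφA
      have hindall : ∀ᵐ x ∂μ, ∀ A ∈ J,
          (e A : X → ℝ) x = (A : Set X).indicator (cg : X → ℝ) x :=
        ae_finset_ball J fun A _ => (hecoe A).mono fun x hx => hx
      filter_upwards [Lp_coeFn_sum e J, hpair, hφAall, hφ0, hcg_coe, hgcoe0, hindall]
        with x hsum hpw hAle hφx hcgx hgx hind
      rw [hsum]
      by_cases hx : ∃ A : ↥𝒜, A ∈ J ∧ x ∈ (A : Set X)
      · obtain ⟨A, hAJ, hxA⟩ := hx
        have hone : ∑ B ∈ J, (e B : X → ℝ) x = (e A : X → ℝ) x := by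
          refine Finset.sum_eq_single_of_mem A hAJ fun B hBJ hBA => ?_
          rw [hind B hBJ]
          exact Set.indicator_of_notMem (fun hxB => hpw B hBJ A hAJ hBA ⟨hxB, hxA⟩) _
        rw [hone, hind A hAJ, Set.indicator_of_mem hxA, hcgx]
        exact hAle A hAJ hxA
      · push_neg at hx
        have hzero : ∑ B ∈ J, (e B : X → ℝ) x = 0 :=
          Finset.sum_eq_zero fun B hBJ => by
            rw [hind B hBJ]
            exact Set.indicator_of_notMem (hx B hBJ) _
        rw [hzero]
        exact hφx
    have hsum0 : ∀ J : Finset ↥𝒜, 0 ≤ ∑ A ∈ J, e A :=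
      fun J => Finset.sum_nonneg fun A _ => he0 A
    have hsum_le_cg : ∀ J : Finset ↥𝒜, (∑ A ∈ J, e A) ≤ cg := by
      intro J
      rw [← MeasureTheory.Lp.coeFn_le]
      refine key J (cg : X → ℝ) hcg_nonneg_ae fun A _ => ?_
      filter_upwards [hcg_coe] with x hx _
      exact hx.ge
    have hbdd : ∃ C : ℝ, ∀ J : Finset ↥𝒜, ‖∑ A ∈ J, e A‖ ≤ C := by
      refine ⟨‖cg‖, fun J => norm_le_norm_of_abs_le_abs ?_⟩
      rw [abs_of_nonneg (hsum0 J), abs_of_nonneg hcg0]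
      exact hsum_le_cg J
    -- cg is the LUB of the partial sums
    have hlub_cg : IsLUB (Set.range fun J : Finset ↥𝒜 => ∑ A ∈ J, e A) cg := by
      constructor
      · rintro _ ⟨J, rfl⟩
        exact hsum_le_cg J
      · intro u hu
        have hu0 : 0 ≤ u := hu ⟨∅, by simp⟩
        have heu : ∀ A : ↥𝒜, e A ≤ u := by
          intro A
          have := hu ⟨{A}, rfl⟩
          simpa using this
        by_contra hnot
        have hGsm := MeasureTheory.Lp.aestronglyMeasurable g
        have hUsm := MeasureTheory.Lp.aestronglyMeasurable u
        set G : X → ℝ := hGsm.mk _ with hGdef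
        set U : X → ℝ := hUsm.mk _ with hUdef
        have hGmeas : Measurable G := hGsm.measurable_mk
        have hUmeas : Measurable U := hUsm.measurable_mk
        have hGae : (g : X → ℝ) =ᵐ[μ] G := hGsm.ae_eq_mk
        have hUae : (u : X → ℝ) =ᵐ[μ] U := hUsm.ae_eq_mk
        set B : Set X := {x | U x < c * G x} with hBdef
        have hBmeas : MeasurableSet B := measurableSet_lt hUmeas (hGmeas.const_mul c)
        have hBpos : μ B ≠ 0 := by
          intro h0
          apply hnot
          rw [← MeasureTheory.Lp.coeFn_le]
          filter_upwards [measure_eq_zero_iff_ae_notMem.1 h0, hGae, hUae, hcg_coe]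
            with x hx hgx hux hcgx
          have hle : c * G x ≤ U x := not_lt.1 hx
          rw [hcgx, hgx, hux]
          exact hle
        have hBA : ∀ A : ↥𝒜, μ (B ∩ (A : Set X)) = 0 := by
          intro A
          have hle := (MeasureTheory.Lp.coeFn_le (e A) u).2 (heu A)
          rw [measure_eq_zero_iff_ae_notMem]
          filter_upwards [hle, hecoe A, hGae, hUae, hcg_coe] with x h1 h2 h3 h4 h5
          rintro ⟨hxB, hxA⟩
          rw [h2, Set.indicator_of_mem hxA, h5, h3, h4] at h1
          have hxB' : U x < c * G x := hxB
          exact absurd h1 (not_le.2 hxB')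
        by_cases hcov : ∀ f ∈ s, ∀ᵐ x ∂μ, x ∈ B → (f : X → ℝ) x < c * G x
        · -- then we can construct a smaller upper bound than g : contradiction
          set V : X → ℝ := fun x => if x ∈ B then c * G x else G x with hVdef
          have hVeq : V = B.indicator (fun x => c * G x) + Bᶜ.indicator G := by
            funext x
            by_cases hx : x ∈ B <;>
              simp [hVdef, Set.indicator_of_mem, Set.indicator_of_notMem, hx]
          have hGmem : MeasureTheory.MemLp G ∞ μ := (MeasureTheory.Lp.memLp g).ae_eq hGae
          have hVmem : MeasureTheory.MemLp V ∞ μ := by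
            rw [hVeq]
            exact ((hGmem.const_mul c).indicator hBmeas).add (hGmem.indicator hBmeas.compl)
          set v : MeasureTheory.Lp ℝ ∞ μ := MeasureTheory.MemLp.toLp V hVmem with hvdef
          have hvcoe : (v : X → ℝ) =ᵐ[μ] V := MeasureTheory.MemLp.coeFn_toLp _
          have hub : v ∈ upperBounds s := by
            intro f hf
            rw [← MeasureTheory.Lp.coeFn_le]
            have hfg := (MeasureTheory.Lp.coeFn_le f g).2 (hlub.1 hf)
            filter_upwards [hcov f hf, hfg, hGae, hvcoe] with x h1 h2 h3 h4
            rw [h4]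
            by_cases hx : x ∈ B
            · rw [hVdef]; simp only [if_pos hx]
              exact (h1 hx).le
            · rw [hVdef]; simp only [if_neg hx]
              rw [← h3]
              exact h2
          have hgv : g ≤ v := hlub.2 hub
          apply hBpos
          rw [measure_eq_zero_iff_ae_notMem]
          have hgv' := (MeasureTheory.Lp.coeFn_le g v).2 hgv
          have hu0' := (MeasureTheory.Lp.coeFn_nonneg u).2 hu0
          filter_upwards [hgv', hvcoe, hGae, hUae, hu0'] with x h1 h2 h3 h4 h5
          intro hxB
          have hxB' : U x < c * G x := hxB
          have hVx : V x = c * G x := if_pos hxB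
          have hGle : G x ≤ c * G x := by
            rw [← hVx, ← h2, ← h3]
            exact h1
          have hU0 : (0:ℝ) ≤ U x := by rw [← h4]; simpa using h5
          have hcGpos : 0 < c * G x := lt_of_le_of_lt hU0 hxB'
          have hGpos : 0 < G x := by
            by_contra hG
            exact absurd (mul_nonpos_iff.2 (Or.inl ⟨hc0'.le, not_lt.1 hG⟩))
              (not_le.2 hcGpos)
          have hlt : c * G x < G x := by
            calc c * G x < 1 * G x := mul_lt_mul_of_pos_right hc1' hGpos
            _ = G x := one_mul _
          exact absurd hGle (not_le.2 hlt)
        · -- otherwise we can enlarge the maximal family : contradiction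
          push_neg at hcov
          obtain ⟨f, hfs, hfae⟩ := hcov
          have hFsm := MeasureTheory.Lp.aestronglyMeasurable f
          set F : X → ℝ := hFsm.mk _ with hFdef
          have hFmeas : Measurable F := hFsm.measurable_mk
          have hFae : (f : X → ℝ) =ᵐ[μ] F := hFsm.ae_eq_mk
          set D : Set X := B ∩ {x | c * G x ≤ F x} with hDdef
          have hDmeas : MeasurableSet D :=
            hBmeas.inter (measurableSet_le (hGmeas.const_mul c) hFmeas)
          have hDpos : μ D ≠ 0 := by
            intro h0
            apply hfae
            filter_upwards [measure_eq_zero_iff_ae_notMem.1 h0, hFae] with x hx hFx hxB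
            rw [hFx] at hxB
            exact hx hxB
          have hDP : P D := by
            refine ⟨hDmeas, f, hfs, ?_⟩
            filter_upwards [hGae, hFae] with x h1 h2 hxD
            rw [h1, h2]
            exact hxD.2
          have hins : insert D 𝒜 ∈ 𝒮 := by
            constructor
            · rintro A (rfl | hA)
              · exact hDP
              · exact h𝒜P A hA
            · haveI : Std.Symm fun A B : Set X => μ (A ∩ B) = 0 :=
                ⟨fun A B hAB => by rwa [Set.inter_comm]⟩
              refine Set.Pairwise.insert_of_symm h𝒜pw ?_
              intro A hA hne'
              exact measure_mono_null
                (Set.inter_subset_inter_left A Set.inter_subset_left) (hBA ⟨A, hA⟩)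
          have hDin : D ∈ 𝒜 := h𝒜.2 hins (Set.subset_insert D 𝒜) (Set.mem_insert D 𝒜)
          have hnull := hBA ⟨D, hDin⟩
          exact hDpos (measure_mono_null
            (Set.subset_inter Set.inter_subset_left subset_rfl) hnull)
    -- apply complete additivity
    have hωcg := hCA ↥𝒜 e he0 hbdd cg hlub_cg
    calc ω cg = ∑' A : ↥𝒜, ω (e A) := hωcg
    _ = ⨆ J : Finset ↥𝒜, ∑ A ∈ J, ω (e A) := ENNReal.tsum_eq_iSup_sum
    _ ≤ ⨆ f ∈ s, ω f := by
        refine iSup_le fun J => ?_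
        rw [← omega_sum hω e he0 J]
        choose fA hfAs hfAae using fun A : ↥𝒜 => (h𝒜P A A.2).2
        obtain ⟨f, hfs, hfle⟩ := directed_finset_le hne hdir fA J (fun A _ => hfAs A)
        refine le_trans (omega_mono hω (hsum0 J) ?_) (le_iSup₂ (f := fun f _ => ω f) f hfs)
        rw [← MeasureTheory.Lp.coeFn_le]
        refine key J (f : X → ℝ)
          (((MeasureTheory.Lp.coeFn_nonneg f).2 (hnn f hfs)).mono fun x hx => by simpa using hx)
          fun A hAJ => ?_
        have hle := (MeasureTheory.Lp.coeFn_le (fA A) f).2 (hfle A hAJ)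
        filter_upwards [hfAae A, hle] with x h1 h2 hxA
        exact (h1 hxA).trans h2
  · -- normal → completely additive
    intro hN ι f hf hbdd g hlub
    have hs_ne : (Set.range fun J : Finset ι => ∑ i ∈ J, f i).Nonempty := ⟨_, ⟨∅, rfl⟩⟩
    have hs_dir : DirectedOn (· ≤ ·) (Set.range fun J : Finset ι => ∑ i ∈ J, f i) := by
      rintro _ ⟨J₁, rfl⟩ _ ⟨J₂, rfl⟩
      exact ⟨_, ⟨J₁ ∪ J₂, rfl⟩,
        Finset.sum_le_sum_of_subset_of_nonneg Finset.subset_union_left fun i _ _ => hf i,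
        Finset.sum_le_sum_of_subset_of_nonneg Finset.subset_union_right fun i _ _ => hf i⟩
    have hs_nn : ∀ u ∈ (Set.range fun J : Finset ι => ∑ i ∈ J, f i), 0 ≤ u := by
      rintro _ ⟨J, rfl⟩
      exact Finset.sum_nonneg fun i _ => hf i
    rw [hN _ hs_ne hs_dir hs_nn g hlub, iSup_range, ENNReal.tsum_eq_iSup_sum]
    exact iSup_congr fun J => omega_sum hω f hf J
end
end

section
/- Let (X,Σ,μ) be a Dedekind measure space. (1) There exists S ∈ Σ such that the measure space (S, Σ|_S, μ|_S) is semifinite and Dedekind, while every measurable E ⊆ X ∖ S with μ(E) > 0 has μ(E) = ∞. (2) If ν is a measure on (X,Σ) with ν ≪ μ and ν is μ-semifinite, then ν has μ-support; moreover ν restricted to S is μ|_S-semifinite, and ν(E) = 0 for every measurable E ⊆ X ∖ S. -/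
open MeasureTheory ENNReal NNReal Set Filter

noncomputable section

open Paper MeasureTheory

/-- Let `(X,Σ,μ)` be a Dedekind measure space.
(1) There is `S ∈ Σ` such that `(S, μ|_S)` is semifinite and Dedekind, while every
measurable `E ⊆ X \ S` with `μ E > 0` has `μ E = ∞`.
(2) For this `S`: every measure `ν ≪ μ` that is μ-semifinite has μ-support; moreover
`ν` restricted to `S` is `μ|_S`-semifinite, and `ν` vanishes on measurable subsets of
`X \ S`. -/
theorem dedekind_semifinite_part
    {X : Type} [MeasurableSpace X] (μ : Measure X) (hμ : Dedekind μ) :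
    ∃ S : Set X, MeasurableSet S ∧
      Semifinite (μ.restrict S) ∧ Dedekind (μ.restrict S) ∧
      (∀ E, MeasurableSet E → E ⊆ Sᶜ → 0 < μ E → μ E = ∞) ∧
      ∀ ν : Measure X, ν ≪ μ → MuSemifinite μ ν →
        HasMuSupport μ ν ∧
        MuSemifinite (μ.restrict S) (ν.restrict S) ∧
        ∀ E, MeasurableSet E → E ⊆ Sᶜ → ν E = 0 := by

  classical
  -- S = essential supremum of the family of finite-measure sets
  obtain ⟨S, hS, hS1, hS2⟩ := hμ {C | MeasurableSet C ∧ μ C < ∞} (fun C hC => hC.1)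
  -- key lemma: subsets of S of infinite measure contain finite positive pieces
  have key : ∀ A, MeasurableSet A → A ⊆ S → μ A = ∞ →
      ∃ F, MeasurableSet F ∧ F ⊆ A ∧ 0 < μ F ∧ μ F < ∞ := by
    intro A hA hAS hAinf
    by_contra hcon
    push_neg at hcon
    have hnull : ∀ F, MeasurableSet F → F ⊆ A → μ F < ∞ → μ F = 0 := by
      intro F hF hFA hFfin
      by_contra h0
      exact absurd (top_le_iff.mp (hcon F hF hFA (pos_iff_ne_zero.mpr h0))) hFfin.ne
    have hT : μ (S \ (S \ A)) = 0 := by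
      refine hS2 (S \ A) (hS.diff hA) ?_
      intro C hC
      have h1 : C \ (S \ A) ⊆ (C \ S) ∪ (C ∩ A) := by
        intro x hx
        rcases hx with ⟨hxC, hx2⟩
        by_cases hxS : x ∈ S
        · right; exact ⟨hxC, by_contra fun hxA => hx2 ⟨hxS, hxA⟩⟩
        · left; exact ⟨hxC, hxS⟩
      refine measure_mono_null h1 (measure_union_null (hS1 C hC) ?_)
      exact hnull (C ∩ A) (hC.1.inter hA) inter_subset_right
        (lt_of_le_of_lt (measure_mono inter_subset_left) hC.2)
    have : S \ (S \ A) = A := by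
      ext x
      simp only [mem_diff, not_and, not_not]
      constructor
      · rintro ⟨hxS, h⟩; exact h hxS
      · intro hxA; exact ⟨hAS hxA, fun _ => hxA⟩
    rw [this, hAinf] at hT
    exact ENNReal.top_ne_zero hT
  -- sets in the complement of S of positive measure are infinite
  have hcompl : ∀ E, MeasurableSet E → E ⊆ Sᶜ → 0 < μ E → μ E = ∞ := by
    intro E hE hEc hpos
    by_contra hfin
    have hmem : E ∈ {C | MeasurableSet C ∧ μ C < ∞} := ⟨hE, lt_top_iff_ne_top.mpr hfin⟩
    have h0 : μ (E \ S) = 0 := hS1 E hmem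
    have : E \ S = E := by
      ext x; simp only [mem_diff]
      exact ⟨fun h => h.1, fun h => ⟨h, hEc h⟩⟩
    rw [this] at h0
    exact absurd h0 (pos_iff_ne_zero.mp hpos)
  refine ⟨S, hS, ?_, ?_, hcompl, ?_⟩
  · -- Semifinite (μ.restrict S)
    intro E hE hEinf
    rw [Measure.restrict_apply hE] at hEinf
    obtain ⟨F, hF, hFsub, hFpos, hFfin⟩ := key (E ∩ S) (hE.inter hS) inter_subset_right hEinf
    have hFS : F ⊆ S := hFsub.trans inter_subset_right
    have heq : μ.restrict S F = μ F := by
      rw [Measure.restrict_apply hF, inter_eq_self_of_subset_left hFS]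
    exact ⟨F, hF, hFsub.trans inter_subset_left, by rw [heq]; exact hFpos,
      by rw [heq]; exact hFfin⟩
  · -- Dedekind (μ.restrict S)
    intro 𝒟 h𝒟
    obtain ⟨S', hS', h1, h2⟩ := hμ 𝒟 h𝒟
    refine ⟨S', hS', ?_, ?_⟩
    · intro C hC
      rw [Measure.restrict_apply ((h𝒟 C hC).diff hS')]
      exact measure_mono_null inter_subset_left (h1 C hC)
    · intro T hT hT0
      have h3 : μ (S' \ (T ∪ Sᶜ)) = 0 := by
        refine h2 (T ∪ Sᶜ) (hT.union hS.compl) ?_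
        intro C hC
        have := hT0 C hC
        rw [Measure.restrict_apply ((h𝒟 C hC).diff hT)] at this
        refine measure_mono_null ?_ this
        intro x hx
        rcases hx with ⟨hxC, hx2⟩
        have hxT : x ∉ T := fun h => hx2 (Or.inl h)
        have hxS : x ∈ S := by
          by_contra h; exact hx2 (Or.inr h)
        exact ⟨⟨hxC, hxT⟩, hxS⟩
      rw [Measure.restrict_apply (hS'.diff hT)]
      refine measure_mono_null ?_ h3
      rintro x ⟨⟨hxS', hxT⟩, hxS⟩
      exact ⟨hxS', fun h => h.elim hxT (fun h' => h' hxS)⟩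
  · -- part (2)
    intro ν hac hsf
    constructor
    · -- HasMuSupport
      obtain ⟨N, hN, hN1, hN2⟩ := hμ {C | MeasurableSet C ∧ ν C = 0} (fun C hC => hC.1)
      have hνN : ν N = 0 := by
        by_contra hνN
        obtain ⟨F, hF, hFN, hFfin, hFpos⟩ := hsf N hN (pos_iff_ne_zero.mpr hνN)
        -- exhaustion inside F
        set 𝒮 : Set (Set X) := {B | MeasurableSet B ∧ B ⊆ F ∧ ν B = 0} with h𝒮
        set s : ℝ≥0∞ := sSup (μ '' 𝒮) with hs
        have hsle : s ≤ μ F := by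
          refine sSup_le ?_
          rintro x ⟨B, hB, rfl⟩
          exact measure_mono hB.2.1
        have hsfin : s < ∞ := lt_of_le_of_lt hsle hFfin
        have hseq : ∀ n : ℕ, ∃ B, MeasurableSet B ∧ B ⊆ F ∧ ν B = 0 ∧
            s ≤ μ B + ((n : ℝ≥0∞) + 1)⁻¹ := by
          intro n
          rcases eq_or_ne s 0 with h0 | h0
          · exact ⟨∅, MeasurableSet.empty, empty_subset _, measure_empty, by simp [h0]⟩
          · have hlt : s - ((n : ℝ≥0∞) + 1)⁻¹ < s :=
              ENNReal.sub_lt_self hsfin.ne h0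
                (ENNReal.inv_ne_zero.mpr (by simp [ENNReal.add_eq_top]))
            rw [hs, lt_sSup_iff] at hlt
            obtain ⟨x, ⟨B, hB, rfl⟩, hxlt⟩ := hlt
            exact ⟨B, hB.1, hB.2.1, hB.2.2, tsub_le_iff_right.mp hxlt.le⟩
        choose Bn hBnm hBnF hBnν hBns using hseq
        set B : Set X := ⋃ n, Bn n with hB
        have hBm : MeasurableSet B := MeasurableSet.iUnion hBnm
        have hBF : B ⊆ F := iUnion_subset hBnF
        have hBν : ν B = 0 := measure_iUnion_null hBnν
        have hBle : μ B ≤ s := le_sSup ⟨B, ⟨hBm, hBF, hBν⟩, rfl⟩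
        have hBfin : μ B < ∞ := lt_of_le_of_lt (le_trans hBle hsle) hFfin
        have hBge : s ≤ μ B := by
          refine ENNReal.le_of_forall_pos_le_add ?_
          intro ε hε _
          obtain ⟨n, hn⟩ := ENNReal.exists_inv_nat_lt (ENNReal.coe_ne_zero.mpr hε.ne')
          calc s ≤ μ (Bn n) + ((n : ℝ≥0∞) + 1)⁻¹ := hBns n
            _ ≤ μ B + (n : ℝ≥0∞)⁻¹ :=
                add_le_add (measure_mono (subset_iUnion Bn n))
                  (ENNReal.inv_le_inv.mpr le_self_add)
            _ ≤ μ B + ε := add_le_add le_rfl hn.le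
        have hBs : μ B = s := le_antisymm hBle hBge
        -- on F \ B, ν-null implies μ-null
        have hclaim : ∀ G, MeasurableSet G → G ⊆ F \ B → ν G = 0 → μ G = 0 := by
          intro G hG hGsub hGν
          have hd : Disjoint B G := by
            refine disjoint_left.mpr fun x hxB hxG => (hGsub hxG).2 hxB
          have hle2 : μ B + μ G ≤ s := by
            rw [← measure_union hd hG]
            refine le_sSup ⟨B ∪ G, ⟨hBm.union hG, union_subset hBF
              (hGsub.trans diff_subset), measure_union_null hBν hGν⟩, rfl⟩
          rw [← hBs] at hle2
          have h4 : μ B + μ G ≤ μ B + 0 := by rw [add_zero]; exact hle2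
          exact le_zero_iff.mp ((ENNReal.add_le_add_iff_left hBfin.ne).mp h4)
        have hνFB : 0 < ν (F \ B) := by
          have hFB0 : ν (F ∩ B) = 0 := measure_mono_null inter_subset_right hBν
          have h5 : ν F ≤ ν (F \ B) + ν (F ∩ B) := by
            conv_lhs => rw [← diff_union_inter F B]
            exact measure_union_le _ _
          rw [hFB0, add_zero] at h5
          exact lt_of_lt_of_le hFpos h5
        have hμFB : 0 < μ (F \ B) := by
          by_contra h
          push_neg at h
          have := hac (le_antisymm h zero_le)
          exact absurd this (pos_iff_ne_zero.mp hνFB)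
        -- contradiction with minimality of N
        have hT : μ (N \ (N \ (F \ B))) = 0 := by
          refine hN2 (N \ (F \ B)) (hN.diff ((hF.diff hBm))) ?_
          intro C hC
          have h1 : C \ (N \ (F \ B)) ⊆ (C \ N) ∪ (C ∩ (F \ B)) := by
            intro x hx
            rcases hx with ⟨hxC, hx2⟩
            by_cases hxN : x ∈ N
            · right; exact ⟨hxC, by_contra fun h => hx2 ⟨hxN, h⟩⟩
            · left; exact ⟨hxC, hxN⟩
          refine measure_mono_null h1 (measure_union_null (hN1 C hC) ?_)
          exact hclaim (C ∩ (F \ B)) (hC.1.inter (hF.diff hBm)) inter_subset_right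
            (measure_mono_null inter_subset_left hC.2)
        have hFBN : F \ B ⊆ N := diff_subset.trans hFN
        have heq : N \ (N \ (F \ B)) = F \ B := by
          rw [Set.diff_diff_right_self, inter_eq_self_of_subset_right hFBN]
        rw [heq] at hT
        exact absurd hT (pos_iff_ne_zero.mp hμFB)
      refine ⟨Nᶜ, hN.compl, ?_, ?_⟩
      · intro E hE
        have h0 : ν (E ∩ N) = 0 := measure_mono_null inter_subset_right hνN
        have h5 : ν E ≤ ν (E ∩ Nᶜ) + ν (E ∩ N) := by
          conv_lhs => rw [← Set.inter_union_compl E N]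
          rw [union_comm]
          exact measure_union_le _ _
        rw [h0, add_zero] at h5
        exact le_antisymm h5 (measure_mono inter_subset_left)
      · intro E hE hEN hpos
        by_contra h
        push_neg at h
        have hE0 : ν E = 0 := le_antisymm h zero_le
        have := hN1 E ⟨hE, hE0⟩
        have heq : E \ N = E := by
          ext x; simp only [mem_diff]
          exact ⟨fun h => h.1, fun hx => ⟨hx, hEN hx⟩⟩
        rw [heq] at this
        exact absurd this (pos_iff_ne_zero.mp hpos)
    constructor
    · -- MuSemifinite of restrictions
      intro E hE hpos
      rw [Measure.restrict_apply hE] at hpos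
      obtain ⟨F, hF, hFsub, hFfin, hFpos⟩ := hsf (E ∩ S) (hE.inter hS) hpos
      have hFS : F ⊆ S := hFsub.trans inter_subset_right
      refine ⟨F, hF, hFsub.trans inter_subset_left, ?_, ?_⟩
      · rw [Measure.restrict_apply hF, inter_eq_self_of_subset_left hFS]; exact hFfin
      · rw [Measure.restrict_apply hF, inter_eq_self_of_subset_left hFS]; exact hFpos
    · -- ν vanishes on measurable subsets of Sᶜ
      intro E hE hEc
      by_contra h
      have hpos : 0 < ν E := pos_iff_ne_zero.mpr h
      obtain ⟨F, hF, hFE, hFfin, hFpos⟩ := hsf E hE hpos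
      have h0 : μ (F \ S) = 0 := hS1 F ⟨hF, hFfin⟩
      have heq : F \ S = F := by
        ext x; simp only [mem_diff]
        exact ⟨fun h => h.1, fun hx => ⟨hx, hEc (hFE hx)⟩⟩
      rw [heq] at h0
      exact absurd (hac h0) (pos_iff_ne_zero.mp hFpos)
end
end

section
/- (Radon–Nikodym for Dedekind measures) Let (X,Σ,μ) be a Dedekind measure space with semifinite part (S, μ|_S). Let ν be a positive measure on (X,Σ) with ν ≪ μ, and assume either (i) ν is μ-semifinite, or (ii) ν restricted to S is μ|_S-semifinite and ν(E) = ∞ for every nonempty measurable E ⊆ X ∖ S. Then there exists a measurable h : X → [0,∞] with ν(E) = ∫_E h dμ for all E ∈ Σ; any such h is μ-a.e. unique on S; and ψ_ν is a normal weight on L∞(X,Σ,μ)₊. Moreover, (1) μ ≪ ν if and only if h may be chosen strictly positive, and (2) ν restricted to S is semifinite if and only if h may be chosen finite on S. -/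
open MeasureTheory ENNReal NNReal Set Filter

noncomputable section

open Paper MeasureTheory

namespace Paper

/-- `S` is (a representative of) the *semifinite part* of the measure `μ`:
`(S, μ|_S)` is semifinite, while every measurable subset of `X \ S` of strictly positive
measure has infinite measure. -/
def IsSemifinitePart {X : Type} [MeasurableSpace X] (μ : Measure X) (S : Set X) : Prop :=
  MeasurableSet S ∧ Semifinite (μ.restrict S) ∧
    ∀ E, MeasurableSet E → E ⊆ Sᶜ → 0 < μ E → μ E = ∞

end Paper
section RNAux

open MeasureTheory ENNReal Set Filter Paper

variable {X : Type} [MeasurableSpace X] {μ ν : Measure X} {S : Set X}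

/-- density of rationals in `ℝ≥0∞` as a sup. -/
lemma iSup_rat_ofReal_lt (a : ℝ≥0∞) :
    ⨆ (q : ℚ) (_ : ENNReal.ofReal q < a), ENNReal.ofReal (q : ℝ) = a := by
  apply le_antisymm
  · exact iSup₂_le fun q hq => hq.le
  · by_contra hlt
    push_neg at hlt
    set b := ⨆ (q : ℚ) (_ : ENNReal.ofReal q < a), ENNReal.ofReal (q : ℝ) with hb
    obtain ⟨q, hq0, h1, h2⟩ := ENNReal.lt_iff_exists_rat_btwn.mp hlt
    have hofq : (Real.toNNReal q : ℝ≥0∞) = ENNReal.ofReal (q : ℝ) := rfl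
    rw [hofq] at h1 h2
    have : ENNReal.ofReal (q : ℝ) ≤ b :=
      le_iSup₂ (f := fun (q : ℚ) (_ : ENNReal.ofReal q < a) => ENNReal.ofReal (q : ℝ)) q h2
    exact absurd (h1.trans_le this) (lt_irrefl b)

lemma exists_pos_finite_subset (hsemi : Semifinite (μ.restrict S))
    (hSm : MeasurableSet S) {D : Set X} (hD : MeasurableSet D) (hDS : D ⊆ S) (hpos : 0 < μ D) :
    ∃ F, MeasurableSet F ∧ F ⊆ D ∧ 0 < μ F ∧ μ F < ∞ := by
  have hres : ∀ A : Set X, A ⊆ S → μ.restrict S A = μ A := by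
    intro A hA
    rw [Measure.restrict_apply' hSm, Set.inter_eq_self_of_subset_left hA]
  by_cases hfin : μ D < ∞
  · exact ⟨D, hD, Set.Subset.rfl, hpos, hfin⟩
  · have hinf : μ.restrict S D = ∞ := by
      rw [hres D hDS]
      exact eq_top_iff.mpr (not_lt.mp hfin)
    obtain ⟨F, hFm, hFD, hF1, hF2⟩ := hsemi D hD hinf
    rw [hres F (hFD.trans hDS)] at hF1 hF2
    exact ⟨F, hFm, hFD, hF1, hF2⟩

lemma measure_eq_iSup_finite (ρ : Measure X) {E : Set X} (hE : MeasurableSet E)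
    (hsf : ∀ B, MeasurableSet B → B ⊆ E → 0 < ρ B →
      ∃ F, MeasurableSet F ∧ F ⊆ B ∧ μ F < ∞ ∧ 0 < ρ F) :
    ρ E = ⨆ (F : {F : Set X // MeasurableSet F ∧ F ⊆ E ∧ μ F < ∞}), ρ F := by
  set u := ⨆ (F : {F : Set X // MeasurableSet F ∧ F ⊆ E ∧ μ F < ∞}), ρ F with hu
  have hle : u ≤ ρ E := iSup_le fun F => measure_mono F.2.2.1
  refine le_antisymm ?_ hle
  by_cases hu_top : u = ∞
  · rw [hu_top]; exact le_top
  have happrox : ∀ n : ℕ, ∃ F : Set X, MeasurableSet F ∧ F ⊆ E ∧ μ F < ∞ ∧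
      u ≤ ρ F + ((n : ℝ≥0∞) + 1)⁻¹ := by
    intro n
    by_cases hcase : u ≤ ((n : ℝ≥0∞) + 1)⁻¹
    · exact ⟨∅, MeasurableSet.empty, Set.empty_subset _, by simp, le_add_left hcase⟩
    · have h1 : u - ((n : ℝ≥0∞) + 1)⁻¹ < u := by
        apply ENNReal.sub_lt_self hu_top
        · intro h0; exact hcase (h0 ▸ zero_le)
        · simp
      obtain ⟨F, hF⟩ := lt_iSup_iff.mp h1
      refine ⟨F.1, F.2.1, F.2.2.1, F.2.2.2, ?_⟩
      calc u = u - ((n : ℝ≥0∞) + 1)⁻¹ + ((n : ℝ≥0∞) + 1)⁻¹ := by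
            rw [tsub_add_cancel_of_le (le_of_not_ge hcase)]
        _ ≤ ρ F.1 + ((n : ℝ≥0∞) + 1)⁻¹ := add_le_add_left hF.le _
  choose G hGm hGE hGfin hGu using happrox
  set A := ⋃ n, G n with hA
  have hAm : MeasurableSet A := MeasurableSet.iUnion hGm
  have hGacc : ∀ n, MeasurableSet (accumulate G n) ∧ accumulate G n ⊆ E ∧
      μ (accumulate G n) < ∞ := by
    intro n
    refine ⟨MeasurableSet.biUnion (Set.to_countable _) fun k _ => hGm k,
      Set.iUnion₂_subset fun k _ => hGE k, ?_⟩
    calc μ (accumulate G n) ≤ ∑ k ∈ Finset.range (n+1), μ (G k) := by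
          refine le_trans (measure_mono ?_) (measure_biUnion_finset_le _ _)
          intro x hx
          simp only [Set.accumulate_def, Set.mem_iUnion] at hx
          obtain ⟨k, hk, hxk⟩ := hx
          exact Set.mem_iUnion₂.mpr ⟨k, by simpa [Finset.mem_range, Nat.lt_succ_iff] using hk, hxk⟩
      _ < ∞ := ENNReal.sum_lt_top.mpr fun k _ => hGfin k
  have hacc_le : ∀ n, ρ (accumulate G n) ≤ u :=
    fun n => le_iSup_of_le (i := ⟨accumulate G n, (hGacc n).1, (hGacc n).2.1, (hGacc n).2.2⟩) le_rfl
  have hAle : ρ A ≤ u := by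
    rw [hA, measure_iUnion_eq_iSup_accumulate]
    exact iSup_le hacc_le
  have hAu : u ≤ ρ A := by
    refine ENNReal.le_of_forall_pos_le_add fun ε hε _ => ?_
    obtain ⟨n, hn⟩ := ENNReal.exists_inv_nat_lt (a := (ε : ℝ≥0∞)) (by simpa using hε.ne')
    refine le_trans ((hGu n).trans (add_le_add_left (measure_mono (Set.subset_iUnion G n)) _)) ?_
    refine add_le_add_right (le_trans ?_ hn.le) _
    exact ENNReal.inv_le_inv.mpr (by simp)
  have hcompl : ρ (E \ A) = 0 := by
    by_contra hpos
    rw [← Ne, ← pos_iff_ne_zero] at hpos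
    obtain ⟨F, hFm, hFsub, hFfin, hFpos⟩ := hsf (E \ A) (hE.diff hAm) Set.diff_subset hpos
    have hFA : ∀ n, ρ F + ρ (accumulate G n) ≤ u := by
      intro n
      have hdisj : Disjoint F (accumulate G n) := by
        refine Set.disjoint_left.mpr fun x hxF hxA => ?_
        rcases Set.mem_iUnion₂.mp hxA with ⟨k, _, hk⟩
        exact (hFsub hxF).2 (Set.mem_iUnion.mpr ⟨k, hk⟩)
      have hle' : ρ (F ∪ accumulate G n) ≤ u :=
        le_iSup_of_le (i := ⟨F ∪ accumulate G n, hFm.union (hGacc n).1,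
          Set.union_subset (hFsub.trans Set.diff_subset) (hGacc n).2.1,
          lt_of_le_of_lt (measure_union_le _ _)
            (ENNReal.add_lt_top.mpr ⟨hFfin, (hGacc n).2.2⟩)⟩) le_rfl
      rw [← measure_union hdisj (hGacc n).1]
      exact hle'
    have hsum : ρ F + ρ A ≤ u := by
      rw [hA, measure_iUnion_eq_iSup_accumulate, ENNReal.add_iSup]
      exact iSup_le hFA
    have hFu : ρ F + u ≤ 0 + u := by
      rw [zero_add]
      exact le_trans (add_le_add_right hAu _) hsum
    have : ρ F ≤ 0 := ENNReal.add_le_add_iff_right hu_top |>.mp hFu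
    exact absurd this (by simpa using hFpos.ne')
  calc ρ E ≤ ρ (E ∩ A) + ρ (E \ A) := le_of_eq (measure_inter_add_diff E hAm).symm
    _ = ρ (E ∩ A) := by rw [hcompl, add_zero]
    _ ≤ ρ A := measure_mono Set.inter_subset_right
    _ ≤ u := hAle

end RNAux
section RNAux2

open MeasureTheory ENNReal Set Filter Paper

variable {X : Type} [MeasurableSpace X] {μ ν : Measure X} {S : Set X}

/-- Local Radon–Nikodym: on a set of finite `μ`-measure, any `ν ≪ μ` has a `[0,∞]`-valued
density. -/
lemma exists_local_density (hac : ν ≪ μ) {F : Set X} (hF : MeasurableSet F)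
    (hFfin : μ F < ∞) :
    ∃ h : X → ℝ≥0∞, Measurable h ∧ ∀ E, MeasurableSet E →
      ν (E ∩ F) = ∫⁻ x in E ∩ F, h x ∂μ := by
  classical
  -- the class of finite-ν subsets of F, and the supremum of their μ-measures
  set m := ⨆ (A : {A : Set X // MeasurableSet A ∧ A ⊆ F ∧ ν A < ∞}), μ A.1 with hm
  have hmfin : m < ∞ := by
    refine lt_of_le_of_lt (iSup_le fun A => measure_mono A.2.2.1) hFfin
  have happrox : ∀ n : ℕ, ∃ A : Set X, MeasurableSet A ∧ A ⊆ F ∧ ν A < ∞ ∧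
      m ≤ μ A + ((n : ℝ≥0∞) + 1)⁻¹ := by
    intro n
    by_cases hcase : m ≤ ((n : ℝ≥0∞) + 1)⁻¹
    · exact ⟨∅, MeasurableSet.empty, Set.empty_subset _, by simp, le_add_left hcase⟩
    · have h1 : m - ((n : ℝ≥0∞) + 1)⁻¹ < m := by
        apply ENNReal.sub_lt_self hmfin.ne
        · intro h0; exact hcase (h0 ▸ zero_le)
        · simp
      obtain ⟨A, hA⟩ := lt_iSup_iff.mp h1
      refine ⟨A.1, A.2.1, A.2.2.1, A.2.2.2, ?_⟩
      calc m = m - ((n : ℝ≥0∞) + 1)⁻¹ + ((n : ℝ≥0∞) + 1)⁻¹ := by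
            rw [tsub_add_cancel_of_le (le_of_not_ge hcase)]
        _ ≤ μ A.1 + ((n : ℝ≥0∞) + 1)⁻¹ := add_le_add_left hA.le _
  choose A hAm hAF hAν hAμ using happrox
  set B : ℕ → Set X := fun n => accumulate A n with hB
  have hBm : ∀ n, MeasurableSet (B n) :=
    fun n => MeasurableSet.biUnion (Set.to_countable _) fun k _ => hAm k
  have hBF : ∀ n, B n ⊆ F := fun n => Set.iUnion₂_subset fun k _ => hAF k
  have hBν : ∀ n, ν (B n) < ∞ := by
    intro n
    calc ν (B n) ≤ ∑ k ∈ Finset.range (n+1), ν (A k) := by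
          refine le_trans (measure_mono ?_) (measure_biUnion_finset_le _ _)
          intro x hx
          simp only [B, Set.accumulate_def, Set.mem_iUnion] at hx
          obtain ⟨k, hk, hxk⟩ := hx
          exact Set.mem_iUnion₂.mpr ⟨k, by simpa [Finset.mem_range, Nat.lt_succ_iff] using hk, hxk⟩
      _ < ∞ := ENNReal.sum_lt_top.mpr fun k _ => hAν k
  set Ai := ⋃ n, A n with hAinf
  have hAinfm : MeasurableSet Ai := MeasurableSet.iUnion hAm
  have hAinfF : Ai ⊆ F := Set.iUnion_subset hAF
  have hABu : Ai = ⋃ n, B n := (Set.iUnion_accumulate).symm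
  have hμAinf : μ Ai ≤ m := by
    rw [hAinf, measure_iUnion_eq_iSup_accumulate (f := A)]
    exact iSup_le fun n => le_iSup_of_le (i := ⟨B n, hBm n, hBF n, hBν n⟩) le_rfl
  have hμAinf_ge : ∀ n : ℕ, m ≤ μ Ai + ((n : ℝ≥0∞) + 1)⁻¹ :=
    fun n => (hAμ n).trans (add_le_add_left (measure_mono (Set.subset_iUnion A n)) _)
  -- on F \ Ai, ν is purely infinite relative to μ
  have hkey : ∀ C, MeasurableSet C → C ⊆ F \ Ai → ν C = ∞ * μ C := by
    intro C hCm hCsub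
    rcases eq_or_ne (μ C) 0 with hC0 | hCpos
    · rw [hC0, mul_zero, hac hC0]
    · have hνC : ν C = ∞ := by
        by_contra hνfin
        rw [← Ne, ← lt_top_iff_ne_top] at hνfin
        -- then B n ∪ C is in the class
        have hle : ∀ n, μ (B n) + μ C ≤ m := by
          intro n
          have hdisj : Disjoint (B n) C := by
            refine Set.disjoint_left.mpr fun x hxB hxC => ?_
            exact (hCsub hxC).2 (hABu ▸ Set.mem_iUnion.mpr ⟨n, hxB⟩)
          have hmem : μ (B n ∪ C) ≤ m :=
            le_iSup_of_le (i := ⟨B n ∪ C, (hBm n).union hCm,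
              Set.union_subset (hBF n) (hCsub.trans Set.diff_subset),
              lt_of_le_of_lt (measure_union_le _ _)
                (ENNReal.add_lt_top.mpr ⟨hBν n, hνfin⟩)⟩) le_rfl
          rw [← measure_union hdisj hCm]
          exact hmem
        have hABle : μ Ai + μ C ≤ m := by
          rw [hAinf, measure_iUnion_eq_iSup_accumulate (f := A), ENNReal.iSup_add]
          exact iSup_le hle
        have hmm : m + μ C ≤ m + 0 := by
          rw [add_zero]
          refine le_trans ?_ hABle
          refine add_le_add_left ?_ _
          -- m ≤ μ Ai
          refine ENNReal.le_of_forall_pos_le_add fun ε hε _ => ?_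
          obtain ⟨n, hn⟩ := ENNReal.exists_inv_nat_lt (a := (ε : ℝ≥0∞)) (by simpa using hε.ne')
          refine le_trans (hμAinf_ge n) (add_le_add_right (le_trans ?_ hn.le) _)
          exact ENNReal.inv_le_inv.mpr (by simp)
        have : μ C ≤ 0 := ENNReal.add_le_add_iff_left hmfin.ne |>.mp hmm
        exact hCpos (le_antisymm this (zero_le))
      rw [ENNReal.top_mul hCpos, hνC]
  -- σ-finiteness of ν on Ai
  have hsf : SigmaFinite (ν.restrict Ai) := by
    refine ⟨⟨⟨fun n => B n ∪ Aiᶜ, fun _ => trivial, ?_, ?_⟩⟩⟩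
    · intro n
      rw [Measure.restrict_apply' hAinfm]
      refine lt_of_le_of_lt (measure_mono ?_) (hBν n)
      rintro x ⟨hx1, hx2⟩
      rcases hx1 with h | h
      · exact h
      · exact absurd hx2 h
    · apply Set.eq_univ_of_univ_subset
      intro x _
      by_cases hx : x ∈ Ai
      · rw [hABu] at hx
        rcases Set.mem_iUnion.mp hx with ⟨n, hn⟩
        exact Set.mem_iUnion.mpr ⟨n, Or.inl hn⟩
      · exact Set.mem_iUnion.mpr ⟨0, Or.inr hx⟩
  have hμfin : IsFiniteMeasure (μ.restrict Ai) :=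
    ⟨by rw [Measure.restrict_apply_univ]; exact lt_of_le_of_lt (measure_mono hAinfF) hFfin⟩
  have hacA : ν.restrict Ai ≪ μ.restrict Ai := hac.restrict Ai
  set r := (ν.restrict Ai).rnDeriv (μ.restrict Ai) with hr
  have hrm : Measurable r := Measure.measurable_rnDeriv _ _
  have hwd : (μ.restrict Ai).withDensity r = ν.restrict Ai :=
    Measure.withDensity_rnDeriv_eq _ _ hacA
  set h : X → ℝ≥0∞ := fun x => if x ∈ Ai then r x else if x ∈ F then ∞ else 0 with hh
  have hhm : Measurable h :=
    Measurable.ite hAinfm hrm (Measurable.ite hF measurable_const measurable_const)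
  refine ⟨h, hhm, ?_⟩
  intro E hE
  have hsplit : E ∩ F = (E ∩ Ai) ∪ (E ∩ (F \ Ai)) := by
    ext x
    constructor
    · rintro ⟨hxE, hxF⟩
      by_cases hxA : x ∈ Ai
      · exact Or.inl ⟨hxE, hxA⟩
      · exact Or.inr ⟨hxE, hxF, hxA⟩
    · rintro (⟨hxE, hxA⟩ | ⟨hxE, hxF, _⟩)
      · exact ⟨hxE, hAinfF hxA⟩
      · exact ⟨hxE, hxF⟩
  have hdisj : Disjoint (E ∩ Ai) (E ∩ (F \ Ai)) :=
    Set.disjoint_left.mpr fun x hx1 hx2 => hx2.2.2 hx1.2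
  have hm1 : MeasurableSet (E ∩ Ai) := hE.inter hAinfm
  have hm2 : MeasurableSet (E ∩ (F \ Ai)) := hE.inter (hF.diff hAinfm)
  have hpart1 : ν (E ∩ Ai) = ∫⁻ x in E ∩ Ai, h x ∂μ := by
    have e1 : ν (E ∩ Ai) = ν.restrict Ai (E ∩ Ai) := by
      rw [Measure.restrict_apply' hAinfm, Set.inter_assoc, Set.inter_self]
    have e2 : ν.restrict Ai (E ∩ Ai) = ∫⁻ x in E ∩ Ai, r x ∂(μ.restrict Ai) := by
      rw [← hwd, withDensity_apply _ hm1]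
    have e3 : (∫⁻ x in E ∩ Ai, r x ∂(μ.restrict Ai)) = ∫⁻ x in E ∩ Ai, r x ∂μ := by
      rw [Measure.restrict_restrict hm1, Set.inter_assoc, Set.inter_self]
    have e4 : (∫⁻ x in E ∩ Ai, r x ∂μ) = ∫⁻ x in E ∩ Ai, h x ∂μ := by
      refine setLIntegral_congr_fun hm1 (fun x hx => ?_)
      simp only [hh, if_pos hx.2]
    rw [e1, e2, e3, e4]
  have hpart2 : ν (E ∩ (F \ Ai)) = ∫⁻ x in E ∩ (F \ Ai), h x ∂μ := by
    have e1 : (∫⁻ x in E ∩ (F \ Ai), h x ∂μ) = ∫⁻ _ in E ∩ (F \ Ai), (∞ : ℝ≥0∞) ∂μ := by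
      refine setLIntegral_congr_fun hm2 (fun x hx => ?_)
      simp only [hh, if_neg hx.2.2, if_pos hx.2.1]
    rw [e1, setLIntegral_const]
    exact hkey _ hm2 (Set.inter_subset_right)
  rw [hsplit, measure_union hdisj hm2, lintegral_union hm2 hdisj, hpart1, hpart2]

end RNAux2
section RNAux3

open MeasureTheory ENNReal Set Filter Paper

variable {X : Type} [MeasurableSpace X] {μ ν : Measure X} {S : Set X}

/-- Two densities for the same measure agree a.e. on a set of finite measure. -/
lemma density_ae_eq_on {W : Set X} (hW : MeasurableSet W) (hWfin : μ W < ∞)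
    {h₁ h₂ : X → ℝ≥0∞} (hm₁ : Measurable h₁) (hm₂ : Measurable h₂)
    (heq : ∀ E, MeasurableSet E → E ⊆ W → ∫⁻ x in E, h₁ x ∂μ = ∫⁻ x in E, h₂ x ∂μ) :
    h₁ =ᵐ[μ.restrict W] h₂ := by
  haveI : IsFiniteMeasure (μ.restrict W) :=
    ⟨by rw [Measure.restrict_apply_univ]; exact hWfin⟩
  refine ae_eq_of_forall_setLIntegral_eq_of_sigmaFinite (μ := μ.restrict W) hm₁ hm₂ ?_
  intro s hs _
  rw [Measure.restrict_restrict hs]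
  exact heq (s ∩ W) (hs.inter hW) Set.inter_subset_right

/-- From a measurable null set to a.e. implication on a set. -/
lemma ae_imp_of_null {P Q : Set X} (hnull : μ (P ∩ Q) = 0) :
    ∀ᵐ x ∂μ, x ∈ P → x ∉ Q := by
  have : ∀ᵐ x ∂μ, x ∉ P ∩ Q := by
    rw [ae_iff]
    simpa using hnull
  filter_upwards [this] with x hx hxP hxQ
  exact hx ⟨hxP, hxQ⟩

/-- The glued density on the semifinite part `S`. -/
lemma exists_density_on_part (hded : Dedekind μ) (hS : IsSemifinitePart μ S)
    (hac : ν ≪ μ)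
    (hsf : ∀ E, MeasurableSet E → E ⊆ S → 0 < ν E →
      ∃ F, MeasurableSet F ∧ F ⊆ E ∧ μ F < ∞ ∧ 0 < ν F) :
    ∃ h : X → ℝ≥0∞, Measurable h ∧ ∀ E, MeasurableSet E → E ⊆ S →
      ν E = ∫⁻ x in E, h x ∂μ := by
  classical
  obtain ⟨hSm, hSsemi, hSinf⟩ := hS
  -- local densities
  have hloc : ∀ F : Set X, ∃ hF : X → ℝ≥0∞, Measurable hF ∧
      (MeasurableSet F → μ F < ∞ → ∀ E, MeasurableSet E →
        ν (E ∩ F) = ∫⁻ x in E ∩ F, hF x ∂μ) := by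
    intro F
    by_cases hF : MeasurableSet F ∧ μ F < ∞
    · obtain ⟨hF1, hF2⟩ := hF
      obtain ⟨hFd, hFdm, hFds⟩ := exists_local_density hac hF1 hF2
      exact ⟨hFd, hFdm, fun _ _ => hFds⟩
    · exact ⟨0, measurable_const, fun h1 h2 => absurd ⟨h1, h2⟩ hF⟩
  choose dens densm densp using hloc
  -- consistency of local densities
  have hcons : ∀ F G : Set X, MeasurableSet F → μ F < ∞ → MeasurableSet G → μ G < ∞ →
      μ ((F ∩ G) ∩ {x | dens F x ≠ dens G x}) = 0 := by
    intro F G hFm hFfin hGm hGfin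
    have hW : MeasurableSet (F ∩ G) := hFm.inter hGm
    have hWfin : μ (F ∩ G) < ∞ := lt_of_le_of_lt (measure_mono Set.inter_subset_left) hFfin
    have hae : dens F =ᵐ[μ.restrict (F ∩ G)] dens G := by
      refine density_ae_eq_on hW hWfin (densm F) (densm G) ?_
      intro E hE hEsub
      have e1 : E ∩ F = E := Set.inter_eq_self_of_subset_left (hEsub.trans Set.inter_subset_left)
      have e2 : E ∩ G = E := Set.inter_eq_self_of_subset_left (hEsub.trans Set.inter_subset_right)
      have d1 := densp F hFm hFfin E hE
      have d2 := densp G hGm hGfin E hE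
      rw [e1] at d1; rw [e2] at d2
      rw [← d1, ← d2]
    rw [Filter.EventuallyEq, ae_iff] at hae
    rw [Measure.restrict_apply' hW] at hae
    rw [Set.inter_comm]
    simpa using hae
  -- apply Dedekind property for each rational level
  have hU : ∀ q : ℚ, ∃ U : Set X, MeasurableSet U ∧
      (∀ F : Set X, MeasurableSet F → μ F < ∞ → F ⊆ S →
        μ ((F ∩ {x | ENNReal.ofReal q < dens F x}) \ U) = 0) ∧
      (∀ T, MeasurableSet T →
        (∀ F : Set X, MeasurableSet F → μ F < ∞ → F ⊆ S →
          μ ((F ∩ {x | ENNReal.ofReal q < dens F x}) \ T) = 0) → μ (U \ T) = 0) := by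
    intro q
    set 𝒞 : Set (Set X) := {C | ∃ F : Set X, MeasurableSet F ∧ μ F < ∞ ∧ F ⊆ S ∧
      C = F ∩ {x | ENNReal.ofReal q < dens F x}} with h𝒞
    have hmeas : ∀ C ∈ 𝒞, MeasurableSet C := by
      rintro C ⟨F, hFm, _, _, rfl⟩
      exact hFm.inter (measurableSet_lt measurable_const (densm F))
    obtain ⟨U, hUm, hUub, hUmin⟩ := hded 𝒞 hmeas
    refine ⟨U, hUm, ?_, ?_⟩
    · intro F hFm hFfin hFS
      exact hUub _ ⟨F, hFm, hFfin, hFS, rfl⟩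
    · intro T hTm hT
      refine hUmin T hTm ?_
      rintro C ⟨F, hFm, hFfin, hFS, rfl⟩
      exact hT F hFm hFfin hFS
  choose U hUm hUub hUmin using hU
  -- monotonized version
  set U' : ℚ → Set X := fun q => ⋂ (q' : ℚ) (_ : q' ≤ q), U q' with hU'
  have hU'm : ∀ q, MeasurableSet (U' q) :=
    fun q => MeasurableSet.iInter fun q' => MeasurableSet.iInter fun _ => hUm q'
  have hU'sub : ∀ q, U' q ⊆ U q := fun q x hx => Set.mem_iInter₂.mp hx q le_rfl
  have hUdiff : ∀ q, μ (U q \ U' q) = 0 := by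
    intro q
    have hsub : U q \ U' q ⊆ ⋃ (q' : ℚ) (_ : q' ≤ q), (U q \ U q') := by
      intro x hx
      obtain ⟨hxU, hxU'⟩ := hx
      simp only [hU', Set.mem_iInter, not_forall] at hxU'
      obtain ⟨q', hq', hxq'⟩ := hxU'
      exact Set.mem_iUnion₂.mpr ⟨q', hq', hxU, hxq'⟩
    refine measure_mono_null hsub (measure_biUnion_null_iff (Set.to_countable _) |>.mpr ?_)
    intro q' hq'
    -- minimality of U q against U q'
    refine hUmin q (U q') (hUm q') ?_
    intro F hFm hFfin hFS
    have hsub2 : F ∩ {x | ENNReal.ofReal q < dens F x} ⊆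
        F ∩ {x | ENNReal.ofReal q' < dens F x} := by
      intro x hx
      exact ⟨hx.1, lt_of_le_of_lt (ENNReal.ofReal_le_ofReal (by exact_mod_cast hq')) hx.2⟩
    exact measure_mono_null (Set.diff_subset_diff_left hsub2) (hUub q' F hFm hFfin hFS)
  -- the glued density
  set hglue : X → ℝ≥0∞ := fun x => ⨆ q : ℚ, (U' q).indicator (fun _ => ENNReal.ofReal q) x
    with hglue_def
  have hgluem : Measurable hglue := by
    refine Measurable.iSup fun q => ?_
    exact Measurable.indicator measurable_const (hU'm q)
  refine ⟨hglue, hgluem, ?_⟩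
  -- main property: a.e. equality with each local density on its set
  have hae_loc : ∀ F : Set X, MeasurableSet F → μ F < ∞ → F ⊆ S →
      ∀ᵐ x ∂μ, x ∈ F → hglue x = dens F x := by
    intro F hFm hFfin hFS
    -- direction ≥ : a.e. x ∈ F, for all q with ofReal q < dens F x, x ∈ U' q
    have h1 : ∀ q : ℚ, μ ((F ∩ {x | ENNReal.ofReal q < dens F x}) \ U' q) = 0 := by
      intro q
      refine measure_mono_null ?_
        (measure_union_null (hUub q F hFm hFfin hFS) (hUdiff q))
      intro x hx
      by_cases hxU : x ∈ U q
      · exact Or.inr ⟨hxU, hx.2⟩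
      · exact Or.inl ⟨hx.1, hxU⟩
    -- direction ≤ : a.e., x ∈ U' q ∩ F implies dens F x ≥ ofReal q
    have h2 : ∀ q : ℚ, μ ((U' q ∩ F) ∩ {x | dens F x < ENNReal.ofReal q}) = 0 := by
      intro q
      have hTnull : μ (U q \ (U q \ (F ∩ {x | dens F x < ENNReal.ofReal q}))) = 0 := by
        refine hUmin q _ ((hUm q).diff (hFm.inter (measurableSet_lt (densm F) measurable_const)))
          ?_
        intro G hGm hGfin hGS
        have hsplit : (G ∩ {x | ENNReal.ofReal q < dens G x}) \
            (U q \ (F ∩ {x | dens F x < ENNReal.ofReal q})) ⊆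
            ((G ∩ {x | ENNReal.ofReal q < dens G x}) \ U q) ∪
            ((F ∩ G) ∩ {x | dens F x ≠ dens G x}) := by
          rintro x ⟨hxC, hxT⟩
          by_cases hxU : x ∈ U q
          · have hxFq : x ∈ F ∩ {x | dens F x < ENNReal.ofReal q} := by
              by_contra hcon
              exact hxT ⟨hxU, hcon⟩
            refine Or.inr ⟨⟨hxFq.1, hxC.1⟩, ?_⟩
            have hlt1 : dens F x < ENNReal.ofReal q := hxFq.2
            have hlt2 : ENNReal.ofReal q < dens G x := hxC.2
            intro heq'
            rw [heq'] at hlt1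
            exact absurd hlt2 (not_lt.mpr hlt1.le)
          · exact Or.inl ⟨hxC, hxU⟩
        exact measure_mono_null hsplit
          (measure_union_null (hUub q G hGm hGfin hGS) (hcons F G hFm hFfin hGm hGfin))
      have : μ (U q ∩ (F ∩ {x | dens F x < ENNReal.ofReal q})) = 0 := by
        refine measure_mono_null ?_ hTnull
        intro x hx
        exact ⟨hx.1, fun hcon => hcon.2 hx.2⟩
      refine measure_mono_null ?_ this
      intro x hx
      exact ⟨hU'sub q hx.1.1, hx.1.2, hx.2⟩
    have hall1 : ∀ᵐ x ∂μ, ∀ q : ℚ, ¬(x ∈ (F ∩ {x | ENNReal.ofReal q < dens F x}) \ U' q) := by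
      rw [ae_all_iff]
      intro q
      rw [ae_iff]
      refine measure_mono_null (fun x hx => not_not.mp hx) (h1 q)
    have hall2 : ∀ᵐ x ∂μ, ∀ q : ℚ, ¬(x ∈ (U' q ∩ F) ∩ {x | dens F x < ENNReal.ofReal q}) := by
      rw [ae_all_iff]
      intro q
      rw [ae_iff]
      refine measure_mono_null (fun x hx => not_not.mp hx) (h2 q)
    filter_upwards [hall1, hall2] with x hx1 hx2 hxF
    -- compute hglue x
    apply le_antisymm
    · -- hglue x ≤ dens F x
      refine iSup_le fun q => ?_
      by_cases hxU : x ∈ U' q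
      · rw [Set.indicator_of_mem hxU]
        by_contra hcon
        push_neg at hcon
        exact hx2 q ⟨⟨hxU, hxF⟩, hcon⟩
      · rw [Set.indicator_of_notMem hxU]
        exact zero_le
    · -- dens F x ≤ hglue x
      conv_lhs => rw [← iSup_rat_ofReal_lt (dens F x)]
      refine iSup₂_le fun q hq => ?_
      have hxU : x ∈ U' q := by
        by_contra hxU
        exact hx1 q ⟨⟨hxF, hq⟩, hxU⟩
      refine le_iSup_of_le q ?_
      rw [Set.indicator_of_mem hxU]
  -- density property on finite-measure subsets of S
  have hfin_dens : ∀ F : Set X, MeasurableSet F → μ F < ∞ → F ⊆ S →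
      ν F = ∫⁻ x in F, hglue x ∂μ := by
    intro F hFm hFfin hFS
    have d := densp F hFm hFfin F hFm
    rw [Set.inter_self] at d
    rw [d]
    refine lintegral_congr_ae ?_
    have := hae_loc F hFm hFfin hFS
    rw [← ae_restrict_iff' hFm] at this
    filter_upwards [this] with x hx
    exact hx.symm
  -- conclude for arbitrary measurable subsets of S via semifiniteness
  intro E hEm hES
  set lam := μ.withDensity hglue with hlam
  have hlam_apply : ∀ B, MeasurableSet B → lam B = ∫⁻ x in B, hglue x ∂μ :=
    fun B hB => withDensity_apply _ hB
  have hlamsf : ∀ B, MeasurableSet B → B ⊆ E → 0 < lam B →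
      ∃ F, MeasurableSet F ∧ F ⊆ B ∧ μ F < ∞ ∧ 0 < lam F := by
    intro B hBm hBE hpos
    rw [hlam_apply B hBm] at hpos
    have hpos' : 0 < μ (B ∩ {x | 0 < hglue x}) := by
      by_contra hcon
      push_neg at hcon
      have h0 : μ (B ∩ {x | 0 < hglue x}) = 0 := le_antisymm hcon (zero_le)
      have hz : ∫⁻ x in B, hglue x ∂μ = 0 := by
        refine (setLIntegral_eq_zero_iff hBm hgluem).mpr (ae_iff.mpr ?_)
        refine measure_mono_null (fun x hx => ?_) h0
        rw [Set.mem_setOf_eq, _root_.not_imp] at hx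
        exact ⟨hx.1, pos_iff_ne_zero.mpr hx.2⟩
      exact absurd hz (ne_of_gt hpos)
    have hcover : B ∩ {x | 0 < hglue x} ⊆
        ⋃ n : ℕ, B ∩ {x | ((n : ℝ≥0∞) + 1)⁻¹ < hglue x} := by
      rintro x ⟨hxB, hx⟩
      obtain ⟨n, hn⟩ := ENNReal.exists_inv_nat_lt (ne_of_gt hx)
      refine Set.mem_iUnion.mpr ⟨n, hxB, lt_of_le_of_lt ?_ hn⟩
      exact ENNReal.inv_le_inv.mpr (by simp)
    have hex : ∃ n : ℕ, 0 < μ (B ∩ {x | ((n : ℝ≥0∞) + 1)⁻¹ < hglue x}) := by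
      by_contra hcon
      push_neg at hcon
      have : μ (⋃ n : ℕ, B ∩ {x | ((n : ℝ≥0∞) + 1)⁻¹ < hglue x}) = 0 :=
        measure_iUnion_null fun n => le_antisymm (hcon n) (zero_le)
      exact absurd (measure_mono_null hcover this) (ne_of_gt hpos')
    obtain ⟨n, hn⟩ := hex
    set c : ℝ≥0∞ := ((n : ℝ≥0∞) + 1)⁻¹ with hc
    have hcpos : 0 < c := by
      rw [hc]
      simp [ENNReal.inv_pos]
    set D := B ∩ {x | c < hglue x} with hD
    have hDm : MeasurableSet D := hBm.inter (measurableSet_lt measurable_const hgluem)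
    have hDS : D ⊆ S := (Set.inter_subset_left).trans (hBE.trans hES)
    obtain ⟨F, hFm, hFD, hFpos, hFfin⟩ := exists_pos_finite_subset hSsemi hSm hDm hDS hn
    refine ⟨F, hFm, hFD.trans Set.inter_subset_left, hFfin, ?_⟩
    rw [hlam_apply F hFm]
    have : c * μ F ≤ ∫⁻ x in F, hglue x ∂μ := by
      rw [← setLIntegral_const F c]
      refine setLIntegral_mono hgluem fun x hx => ?_
      exact (hFD hx).2.le
    exact lt_of_lt_of_le (ENNReal.mul_pos hcpos.ne' hFpos.ne') this
  have hnusf : ∀ B, MeasurableSet B → B ⊆ E → 0 < ν B →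
      ∃ F, MeasurableSet F ∧ F ⊆ B ∧ μ F < ∞ ∧ 0 < ν F :=
    fun B hBm hBE hpos => hsf B hBm (hBE.trans hES) hpos
  have hfinal : ν E = lam E := by
    rw [measure_eq_iSup_finite (μ := μ) ν hEm hnusf,
      measure_eq_iSup_finite (μ := μ) lam hEm hlamsf]
    refine iSup_congr fun F => ?_
    rw [hfin_dens F.1 F.2.1 F.2.2.2 (F.2.2.1.trans hES), hlam_apply F.1 F.2.1]
  rw [hfinal, hlam_apply E hEm]

end RNAux3
section RNAux4

open MeasureTheory ENNReal Set Filter Paper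

variable {X : Type} [MeasurableSpace X] {μ ν : Measure X} {S : Set X}

lemma restrict_eq_self_of_subset_of_meas (hSm : MeasurableSet S) {A : Set X} (hA : A ⊆ S) :
    μ.restrict S A = μ A := by
  rw [Measure.restrict_apply' hSm, Set.inter_eq_self_of_subset_left hA]

lemma common_semifinite (hSm : MeasurableSet S)
    (hcase : MuSemifinite μ ν ∨ (MuSemifinite (μ.restrict S) (ν.restrict S) ∧
      ∀ E, MeasurableSet E → E ⊆ Sᶜ → E.Nonempty → ν E = ∞)) :
    ∀ E, MeasurableSet E → E ⊆ S → 0 < ν E →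
      ∃ F, MeasurableSet F ∧ F ⊆ E ∧ μ F < ∞ ∧ 0 < ν F := by
  intro E hEm hES hpos
  rcases hcase with hmu | ⟨hmuS, _⟩
  · exact hmu E hEm hpos
  · have hres : ν.restrict S E = ν E := restrict_eq_self_of_subset_of_meas hSm hES
    obtain ⟨F, hFm, hFE, hFfin, hFpos⟩ := hmuS E hEm (by rw [hres]; exact hpos)
    have hFS : F ⊆ S := hFE.trans hES
    rw [restrict_eq_self_of_subset_of_meas hSm hFS] at hFfin hFpos
    exact ⟨F, hFm, hFE, hFfin, hFpos⟩

lemma exists_density_full (hded : Dedekind μ) (hS : IsSemifinitePart μ S) (hac : ν ≪ μ)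
    (hcase : MuSemifinite μ ν ∨ (MuSemifinite (μ.restrict S) (ν.restrict S) ∧
      ∀ E, MeasurableSet E → E ⊆ Sᶜ → E.Nonempty → ν E = ∞)) :
    ∃ h : X → ℝ≥0∞, Measurable h ∧ ∀ E, MeasurableSet E → ν E = ∫⁻ x in E, h x ∂μ := by
  classical
  obtain ⟨hSm, hSsemi, hSinf⟩ := hS
  have hsf := common_semifinite hSm hcase
  obtain ⟨h0, h0m, h0p⟩ := exists_density_on_part hded ⟨hSm, hSsemi, hSinf⟩ hac hsf
  have hsplitν : ∀ E : Set X, ν E = ν (E ∩ S) + ν (E \ S) :=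
    fun E => (measure_inter_add_diff E hSm).symm
  rcases hcase with hmu | ⟨hmuS, hinf⟩
  · -- case (i): ν vanishes off S
    have hoff : ∀ E, MeasurableSet E → E ⊆ Sᶜ → ν E = 0 := by
      intro E hEm hES
      by_contra hne
      obtain ⟨F, hFm, hFE, hFfin, hFpos⟩ := hmu E hEm (pos_iff_ne_zero.mpr hne)
      have hμF : 0 < μ F := by
        rw [pos_iff_ne_zero]
        intro h0'
        exact absurd (hac h0') (ne_of_gt hFpos)
      exact absurd (hSinf F hFm (hFE.trans hES) hμF) (ne_of_lt hFfin)
    refine ⟨fun x => if x ∈ S then h0 x else 0,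
      Measurable.ite hSm h0m measurable_const, ?_⟩
    intro E hEm
    rw [hsplitν E, ← lintegral_inter_add_diff _ E hSm]
    congr 1
    · rw [h0p (E ∩ S) (hEm.inter hSm) Set.inter_subset_right]
      refine setLIntegral_congr_fun (hEm.inter hSm) (fun x hx => ?_)
      rw [if_pos hx.2]
    · rw [hoff (E \ S) (hEm.diff hSm) fun x hx => hx.2]
      have heq0 : ∫⁻ x in E \ S, (if x ∈ S then h0 x else 0) ∂μ =
          ∫⁻ _ in E \ S, (0 : ℝ≥0∞) ∂μ :=
        setLIntegral_congr_fun (hEm.diff hSm) (fun x hx => if_neg hx.2)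
      rw [heq0]
      simp
  · -- case (ii): ν is infinite on nonempty measurable subsets of Sᶜ
    refine ⟨fun x => if x ∈ S then h0 x else ∞,
      Measurable.ite hSm h0m measurable_const, ?_⟩
    intro E hEm
    rw [hsplitν E, ← lintegral_inter_add_diff _ E hSm]
    congr 1
    · rw [h0p (E ∩ S) (hEm.inter hSm) Set.inter_subset_right]
      refine setLIntegral_congr_fun (hEm.inter hSm) (fun x hx => ?_)
      rw [if_pos hx.2]
    · have heval : ∫⁻ x in E \ S, (if x ∈ S then h0 x else ∞) ∂μ = ∞ * μ (E \ S) := by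
        rw [setLIntegral_congr_fun (hEm.diff hSm)
          (fun x (hx : x ∈ E \ S) => by rw [if_neg hx.2]), setLIntegral_const]
      rcases Set.eq_empty_or_nonempty (E \ S) with hemp | hne
      · rw [heval, hemp]
        simp
      · have hνinf : ν (E \ S) = ∞ := hinf (E \ S) (hEm.diff hSm) (fun x hx => hx.2) hne
        have hμpos : μ (E \ S) ≠ 0 := by
          intro h0'
          rw [hac h0'] at hνinf
          exact absurd hνinf (by simp)
        rw [heval, hνinf, ENNReal.top_mul hμpos]

lemma density_unique_on_part (hS : IsSemifinitePart μ S)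
    {h₁ h₂ : X → ℝ≥0∞} (hm₁ : Measurable h₁) (hm₂ : Measurable h₂)
    (hp₁ : ∀ E, MeasurableSet E → ν E = ∫⁻ x in E, h₁ x ∂μ)
    (hp₂ : ∀ E, MeasurableSet E → ν E = ∫⁻ x in E, h₂ x ∂μ) :
    h₁ =ᵐ[μ.restrict S] h₂ := by
  obtain ⟨hSm, hSsemi, _⟩ := hS
  have hnem : MeasurableSet {x | h₁ x ≠ h₂ x} := by
    have : {x | h₁ x ≠ h₂ x} = {x | h₁ x < h₂ x} ∪ {x | h₂ x < h₁ x} := by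
      ext x
      exact ne_iff_lt_or_gt
    rw [this]
    exact (measurableSet_lt hm₁ hm₂).union (measurableSet_lt hm₂ hm₁)
  have hkey : μ ({x | h₁ x ≠ h₂ x} ∩ S) = 0 := by
    by_contra hne
    set D := {x | h₁ x ≠ h₂ x} ∩ S with hD
    obtain ⟨F, hFm, hFD, hFpos, hFfin⟩ := exists_pos_finite_subset hSsemi hSm
      (hnem.inter hSm) Set.inter_subset_right (pos_iff_ne_zero.mpr hne)
    have hae : h₁ =ᵐ[μ.restrict F] h₂ := by
      refine density_ae_eq_on hFm hFfin hm₁ hm₂ fun E hE _ => ?_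
      rw [← hp₁ E hE, ← hp₂ E hE]
    have : μ.restrict F {x | ¬ h₁ x = h₂ x} = 0 := ae_iff.mp hae
    rw [Measure.restrict_apply' hFm] at this
    have hFsub : F ⊆ {x | ¬ h₁ x = h₂ x} ∩ F :=
      fun x hx => ⟨(hFD hx).1, hx⟩
    exact absurd (measure_mono_null hFsub this |>.symm ▸ rfl : μ F = 0) (ne_of_gt hFpos)
  refine ae_iff.mpr ?_
  rw [Measure.restrict_apply' hSm]
  exact hkey

end RNAux4
section RNAux5

open MeasureTheory ENNReal Set Filter Paper

variable {X : Type} [MeasurableSpace X] {μ ν : Measure X} {S : Set X}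

lemma directedOn_finset_le {α : Type*} [Preorder α] {s : Set α} (hne : s.Nonempty)
    (hdir : DirectedOn (· ≤ ·) s) (t : Finset α) (ht : ∀ x ∈ t, x ∈ s) :
    ∃ u ∈ s, ∀ x ∈ t, x ≤ u := by
  classical
  induction t using Finset.induction_on with
  | empty => exact ⟨hne.choose, hne.choose_spec, by simp⟩
  | @insert a r ha ih =>
    obtain ⟨u, hu, hru⟩ := ih fun x hx => ht x (Finset.mem_insert_of_mem hx)
    obtain ⟨w, hw, haw, huw⟩ := hdir a (ht a (Finset.mem_insert_self a r)) u hu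
    refine ⟨w, hw, fun x hx => ?_⟩
    rcases Finset.mem_insert.mp hx with rfl | hxr
    · exact haw
    · exact (hru x hxr).trans huw

/-- If every element of `s` is `≤ g - ε` a.e. on `P`, and `g` is the least upper bound
of `s` in `L∞`, then `P` is null. -/
lemma lub_perturbation {s : Set (Lp ℝ ∞ μ)} {g : Lp ℝ ∞ μ} (hlub : IsLUB s g)
    {ε : ℝ} (hε : 0 < ε) {P : Set X} (hP : MeasurableSet P)
    (hub : ∀ f ∈ s, ∀ᵐ x ∂μ, x ∈ P → (f : X → ℝ) x ≤ (g : X → ℝ) x - ε) :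
    μ P = 0 := by
  classical
  have hχmem : MemLp (P.indicator fun _ => (1 : ℝ)) ∞ μ :=
    memLp_top_of_bound ((measurable_const.indicator hP).aestronglyMeasurable) 1
      (ae_of_all _ fun x => by
        by_cases hx : x ∈ P
        · rw [Set.indicator_of_mem hx]; simp
        · rw [Set.indicator_of_notMem hx]; simp)
  set χ := hχmem.toLp _ with hχ
  set b := g - ε • χ with hb
  have hbcoe : ∀ᵐ x ∂μ, (b : X → ℝ) x
      = (g : X → ℝ) x - ε * P.indicator (fun _ => (1 : ℝ)) x := by
    filter_upwards [Lp.coeFn_sub g (ε • χ), Lp.coeFn_smul (ε : ℝ) χ,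
      MemLp.coeFn_toLp hχmem] with x h1 h2 h3
    show (g - ε • χ : Lp ℝ ∞ μ) x = _
    rw [h1]
    simp only [Pi.sub_apply]
    rw [h2]
    simp only [Pi.smul_apply, smul_eq_mul]
    rw [show (χ : X → ℝ) x = P.indicator (fun _ => (1:ℝ)) x from h3]
  have hbub : b ∈ upperBounds s := by
    intro f hf
    rw [← Lp.coeFn_le]
    have hfg : (f : X → ℝ) ≤ᵐ[μ] g := (Lp.coeFn_le f g).mpr (hlub.1 hf)
    filter_upwards [hfg, hub f hf, hbcoe] with x h1 h2 h3
    rw [h3]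
    by_cases hx : x ∈ P
    · rw [Set.indicator_of_mem hx]
      have := h2 hx
      linarith
    · rw [Set.indicator_of_notMem hx]
      simpa using h1
  have hgb : (g : X → ℝ) ≤ᵐ[μ] b := (Lp.coeFn_le g b).mpr (hlub.2 hbub)
  have hae : ∀ᵐ x ∂μ, x ∉ P := by
    filter_upwards [hgb, hbcoe] with x h1 h2 hx
    rw [h2, Set.indicator_of_mem hx] at h1
    linarith
  have h0 := ae_iff.mp hae
  refine measure_mono_null (fun x hx => ?_) h0
  exact not_not_intro hx

lemma psiW_mono (hac : ν ≪ μ) {f g : Lp ℝ ∞ μ} (hfg : f ≤ g) :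
    psiW μ ν f ≤ psiW μ ν g := by
  have h1 : (f : X → ℝ) ≤ᵐ[μ] g := (Lp.coeFn_le f g).mpr hfg
  have h2 : (f : X → ℝ) ≤ᵐ[ν] g := h1.filter_mono hac.ae_le
  exact lintegral_mono_ae (h2.mono fun x hx => ENNReal.ofReal_le_ofReal hx)

end RNAux5
section RNAux6

open MeasureTheory ENNReal Set Filter Paper

variable {X : Type} [MeasurableSpace X] {μ ν : Measure X} {S : Set X}

lemma psiW_normal (hded : Dedekind μ) (hS : IsSemifinitePart μ S) (hac : ν ≪ μ)
    (hcase : MuSemifinite μ ν ∨ (MuSemifinite (μ.restrict S) (ν.restrict S) ∧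
      ∀ E, MeasurableSet E → E ⊆ Sᶜ → E.Nonempty → ν E = ∞)) :
    NormalWeight μ (psiW μ ν) := by
  classical
  obtain ⟨hdens, hdm, hdp⟩ := exists_density_full hded hS hac hcase
  obtain ⟨hSm, hSsemi, hSinf⟩ := hS
  intro s hne hdir hposs g hlub
  set c := ⨆ f ∈ s, psiW μ ν f with hc
  have hge : c ≤ psiW μ ν g := iSup₂_le fun f hf => psiW_mono hac (hlub.1 hf)
  refine le_antisymm ?_ hge
  by_cases hctop : c = ∞
  · rw [hctop]; exact le_top
  by_contra hgt'
  push_neg at hgt'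
  -- the measure ρ = (ofReal ∘ g) · ν
  have hgme : Measurable fun x => ENNReal.ofReal ((g : X → ℝ) x) :=
    ENNReal.measurable_ofReal.comp (Lp.stronglyMeasurable g).measurable
  set ρ : Measure X := ν.withDensity (fun x => ENNReal.ofReal ((g : X → ℝ) x)) with hρdef
  have hρ_apply : ∀ A, MeasurableSet A →
      ρ A = ∫⁻ x in A, ENNReal.ofReal ((g : X → ℝ) x) ∂ν :=
    fun A hA => withDensity_apply _ hA
  have hρν : ρ ≪ ν := withDensity_absolutelyContinuous ν _
  have hρμ : ρ ≪ μ := hρν.trans hac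
  have hρuniv : ρ Set.univ = psiW μ ν g := by
    rw [hρ_apply _ MeasurableSet.univ, Measure.restrict_univ]
    rfl
  -- find a level set W = {δ < g} with c < ρ W
  have hWex : ∃ n : ℕ, c < ρ {x | ((n : ℝ) + 1)⁻¹ < (g : X → ℝ) x} := by
    set Wn : ℕ → Set X := fun n => {x | ((n : ℝ) + 1)⁻¹ < (g : X → ℝ) x} with hWn
    have hWnm : ∀ n, MeasurableSet (Wn n) :=
      fun n => measurableSet_lt measurable_const (Lp.stronglyMeasurable g).measurable
    have hmono : Monotone Wn := by
      intro m n hmn x hx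
      have hx' : ((m : ℝ) + 1)⁻¹ < (g : X → ℝ) x := hx
      show ((n : ℝ) + 1)⁻¹ < (g : X → ℝ) x
      refine lt_of_le_of_lt ?_ hx'
      have h1 : (0 : ℝ) < (m : ℝ) + 1 := by positivity
      have h2 : (m : ℝ) + 1 ≤ (n : ℝ) + 1 := by exact_mod_cast Nat.add_le_add_right hmn 1
      exact inv_anti₀ h1 h2
    have hcov : ρ Set.univ ≤ ρ (⋃ n, Wn n) + ρ {x | ¬ (0 : ℝ) < (g : X → ℝ) x} := by
      refine le_trans (measure_mono ?_) (measure_union_le _ _)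
      intro x _
      by_cases hx : 0 < (g : X → ℝ) x
      · obtain ⟨n, hn⟩ := exists_nat_gt (((g : X → ℝ) x)⁻¹)
        have hn' : (((g : X → ℝ) x)⁻¹) < (n : ℝ) + 1 := hn.trans (by linarith)
        exact Or.inl (Set.mem_iUnion.mpr ⟨n, inv_lt_of_inv_lt₀ hx hn'⟩)
      · exact Or.inr hx
    have hzero : ρ {x | ¬ (0 : ℝ) < (g : X → ℝ) x} = 0 := by
      have hm0 : MeasurableSet {x | ¬ (0 : ℝ) < (g : X → ℝ) x} := by
        rw [show {x | ¬ (0 : ℝ) < (g : X → ℝ) x} = {x | (0:ℝ) < (g : X → ℝ) x}ᶜ from rfl]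
        exact (measurableSet_lt measurable_const (Lp.stronglyMeasurable g).measurable).compl
      rw [hρ_apply _ hm0]
      have : ∫⁻ x in {x | ¬ (0 : ℝ) < (g : X → ℝ) x}, ENNReal.ofReal ((g : X → ℝ) x) ∂ν
          = ∫⁻ _ in {x | ¬ (0 : ℝ) < (g : X → ℝ) x}, (0 : ℝ≥0∞) ∂ν := by
        refine setLIntegral_congr_fun hm0 (fun x hx => ?_)
        exact ENNReal.ofReal_eq_zero.mpr (le_of_not_gt hx)
      rw [this]
      simp
    have hlt : c < ⨆ n, ρ (Wn n) := by
      have := hgt'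
      rw [← hρuniv] at this
      rw [← hmono.measure_iUnion]
      refine lt_of_lt_of_le this ?_
      calc ρ Set.univ ≤ ρ (⋃ n, Wn n) + ρ {x | ¬ (0 : ℝ) < (g : X → ℝ) x} := hcov
        _ = ρ (⋃ n, Wn n) := by rw [hzero, add_zero]
    obtain ⟨n, hn⟩ := lt_iSup_iff.mp hlt
    exact ⟨n, hn⟩
  obtain ⟨nδ, hWlt⟩ := hWex
  set δ : ℝ := ((nδ : ℝ) + 1)⁻¹ with hδdef
  have hδ : 0 < δ := by positivity
  set W : Set X := {x | δ < (g : X → ℝ) x} with hWdef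
  have hWm : MeasurableSet W :=
    measurableSet_lt measurable_const (Lp.stronglyMeasurable g).measurable
  -- choose θ and ε
  obtain ⟨θ, hθ1, hθ2⟩ := exists_between hWlt
  have hθtop : θ ≠ ∞ := ne_top_of_lt hθ2
  have hδ2pos : (0:ℝ≥0∞) < ENNReal.ofReal (δ / 2) := ENNReal.ofReal_pos.mpr (by positivity)
  set K : ℝ≥0∞ := c / ENNReal.ofReal (δ / 2) with hKdef
  have hKtop : K ≠ ∞ := by
    rw [hKdef]
    intro htop
    rcases ENNReal.div_eq_top.mp htop with ⟨_, h2⟩ | ⟨h1, _⟩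
    · exact absurd h2 hδ2pos.ne'
    · exact hctop h1
  set K' : ℝ≥0∞ := K + 1 with hK'def
  have hK'0 : K' ≠ 0 := by simp [hK'def]
  have hK'top : K' ≠ ∞ := by
    rw [hK'def]
    exact ENNReal.add_ne_top.mpr ⟨hKtop, ENNReal.one_ne_top⟩
  set η : ℝ≥0∞ := min (ENNReal.ofReal (δ / 2)) ((θ - c) / (2 * K')) with hηdef
  have hθc : (0:ℝ≥0∞) < θ - c := tsub_pos_iff_lt.mpr hθ1
  have hη0 : η ≠ 0 := by
    have hdiv : (0:ℝ≥0∞) < (θ - c) / (2 * K') :=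
      ENNReal.div_pos hθc.ne' (ENNReal.mul_ne_top (by simp) hK'top)
    exact (lt_min hδ2pos hdiv).ne'
  have hηtop : η ≠ ∞ :=
    ne_top_of_le_ne_top (by simp [ENNReal.ofReal_ne_top]) (min_le_left _ _)
  set ε : ℝ := η.toReal with hεdef
  have hε : 0 < ε := ENNReal.toReal_pos hη0 hηtop
  have hofε : ENNReal.ofReal ε = η := ENNReal.ofReal_toReal hηtop
  have hεδ2 : ε ≤ δ / 2 := by
    have h1 : η ≤ ENNReal.ofReal (δ / 2) := min_le_left _ _
    calc ε = η.toReal := rfl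
      _ ≤ (ENNReal.ofReal (δ / 2)).toReal := ENNReal.toReal_mono ENNReal.ofReal_ne_top h1
      _ = δ / 2 := ENNReal.toReal_ofReal (by positivity)
  -- the sets E f
  set E : Lp ℝ ∞ μ → Set X := fun f => {x | (g : X → ℝ) x - ε < (f : X → ℝ) x} with hEdef
  have hEm : ∀ f, MeasurableSet (E f) := fun f =>
    measurableSet_lt ((Lp.stronglyMeasurable g).measurable.sub measurable_const)
      (Lp.stronglyMeasurable f).measurable
  have hEmono : ∀ f u : Lp ℝ ∞ μ, f ≤ u → μ (E f \ E u) = 0 := by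
    intro f u hfu
    have h1 : (f : X → ℝ) ≤ᵐ[μ] u := (Lp.coeFn_le f u).mpr hfu
    have h2 := ae_iff.mp h1
    refine measure_mono_null (fun x hx => ?_) h2
    intro hle
    exact hx.2 (lt_of_lt_of_le hx.1 hle)
  -- bounds
  have hbound1 : ∀ f ∈ s, ν (W ∩ E f) ≤ K := by
    intro f hf
    have hptw : ∀ x ∈ W ∩ E f, ENNReal.ofReal (δ / 2) ≤ ENNReal.ofReal ((f : X → ℝ) x) := by
      intro x hx
      refine ENNReal.ofReal_le_ofReal ?_
      have h1 : δ < (g : X → ℝ) x := hx.1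
      have h2 : (g : X → ℝ) x - ε < (f : X → ℝ) x := hx.2
      linarith
    have hψf : psiW μ ν f ≤ c := le_iSup₂ (f := fun f _ => psiW μ ν f) f hf
    have hint : ENNReal.ofReal (δ / 2) * ν (W ∩ E f) ≤ psiW μ ν f := by
      calc ENNReal.ofReal (δ / 2) * ν (W ∩ E f)
          = ∫⁻ _ in W ∩ E f, ENNReal.ofReal (δ / 2) ∂ν := (setLIntegral_const _ _).symm
        _ ≤ ∫⁻ x in W ∩ E f, ENNReal.ofReal ((f : X → ℝ) x) ∂ν :=
            setLIntegral_mono (ENNReal.measurable_ofReal.comp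
              (Lp.stronglyMeasurable f).measurable) hptw
        _ ≤ ∫⁻ x, ENNReal.ofReal ((f : X → ℝ) x) ∂ν := setLIntegral_le_lintegral _ _
        _ = psiW μ ν f := rfl
    rw [hKdef]
    rw [ENNReal.le_div_iff_mul_le (Or.inl hδ2pos.ne') (Or.inl ENNReal.ofReal_ne_top)]
    calc ν (W ∩ E f) * ENNReal.ofReal (δ / 2)
        = ENNReal.ofReal (δ / 2) * ν (W ∩ E f) := mul_comm _ _
      _ ≤ psiW μ ν f := hint
      _ ≤ c := hψf
  set c' : ℝ≥0∞ := c + η * K with hc'def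
  have hbound2 : ∀ f ∈ s, ρ (W ∩ E f) ≤ c' := by
    intro f hf
    have hWEm : MeasurableSet (W ∩ E f) := hWm.inter (hEm f)
    have hψf : psiW μ ν f ≤ c := le_iSup₂ (f := fun f _ => psiW μ ν f) f hf
    have hptw : ∀ x ∈ W ∩ E f,
        ENNReal.ofReal ((g : X → ℝ) x) ≤ ENNReal.ofReal ((f : X → ℝ) x) + η := by
      intro x hx
      have h2 : (g : X → ℝ) x - ε < (f : X → ℝ) x := hx.2
      calc ENNReal.ofReal ((g : X → ℝ) x) ≤ ENNReal.ofReal ((f : X → ℝ) x + ε) :=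
            ENNReal.ofReal_le_ofReal (by linarith)
        _ ≤ ENNReal.ofReal ((f : X → ℝ) x) + ENNReal.ofReal ε := ENNReal.ofReal_add_le
        _ = ENNReal.ofReal ((f : X → ℝ) x) + η := by rw [hofε]
    calc ρ (W ∩ E f) = ∫⁻ x in W ∩ E f, ENNReal.ofReal ((g : X → ℝ) x) ∂ν :=
          hρ_apply _ hWEm
      _ ≤ ∫⁻ x in W ∩ E f, (ENNReal.ofReal ((f : X → ℝ) x) + η) ∂ν :=
          setLIntegral_mono ((ENNReal.measurable_ofReal.comp
            (Lp.stronglyMeasurable f).measurable).add measurable_const) hptw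
      _ = (∫⁻ x in W ∩ E f, ENNReal.ofReal ((f : X → ℝ) x) ∂ν) + η * ν (W ∩ E f) := by
          rw [lintegral_add_right _ measurable_const, setLIntegral_const]
      _ ≤ psiW μ ν f + η * K :=
          add_le_add (setLIntegral_le_lintegral _ _)
            (mul_le_mul_right (hbound1 f hf) η)
      _ ≤ c' := by rw [hc'def]; exact add_le_add_left hψf _
  have hc'θ : c' < θ := by
    have hηK : η * K ≤ (θ - c) / 2 := by
      have h1 : η ≤ (θ - c) / (2 * K') := min_le_right _ _
      have h2 : K ≤ K' := by rw [hK'def]; exact le_self_add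
      calc η * K ≤ ((θ - c) / (2 * K')) * K' := mul_le_mul' h1 h2
        _ = (θ - c) * ((2 * K')⁻¹ * K') := by rw [div_eq_mul_inv, mul_assoc]
        _ = (θ - c) * (2⁻¹ * (K'⁻¹ * K')) := by
            rw [ENNReal.mul_inv (Or.inl (by simp)) (Or.inl (by simp)), mul_assoc]
        _ = (θ - c) * 2⁻¹ := by rw [ENNReal.inv_mul_cancel hK'0 hK'top, mul_one]
        _ = (θ - c) / 2 := by rw [div_eq_mul_inv]
    have hhalf : (θ - c) / 2 < θ - c :=
      ENNReal.half_lt_self hθc.ne' (ne_top_of_le_ne_top hθtop tsub_le_self)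
    calc c' = c + η * K := hc'def
      _ ≤ c + (θ - c) / 2 := add_le_add_right hηK _
      _ < c + (θ - c) := ENNReal.add_lt_add_left hctop hhalf
      _ = θ := add_tsub_cancel_of_le hθ1.le
  -- the supremum β over the family
  set β : ℝ≥0∞ := ⨆ f : {f : Lp ℝ ∞ μ // f ∈ s}, ρ (W ∩ E f.1) with hβdef
  have hβc' : β ≤ c' := iSup_le fun f => hbound2 f.1 f.2
  have hβtop : β ≠ ∞ := ne_top_of_le_ne_top (ne_top_of_lt hc'θ) hβc'
  have happrox : ∀ n : ℕ, ∃ f, f ∈ s ∧ β ≤ ρ (W ∩ E f) + ((n : ℝ≥0∞) + 1)⁻¹ := by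
    intro n
    by_cases hcase2 : β ≤ ((n : ℝ≥0∞) + 1)⁻¹
    · exact ⟨hne.choose, hne.choose_spec, le_add_left hcase2⟩
    · have h1 : β - ((n : ℝ≥0∞) + 1)⁻¹ < β := by
        apply ENNReal.sub_lt_self hβtop
        · intro h0; exact hcase2 (h0 ▸ zero_le)
        · simp
      obtain ⟨f, hf⟩ := lt_iSup_iff.mp h1
      refine ⟨f.1, f.2, ?_⟩
      calc β = β - ((n : ℝ≥0∞) + 1)⁻¹ + ((n : ℝ≥0∞) + 1)⁻¹ := by
            rw [tsub_add_cancel_of_le (le_of_not_ge hcase2)]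
        _ ≤ ρ (W ∩ E f.1) + ((n : ℝ≥0∞) + 1)⁻¹ := add_le_add_left hf.le _
  choose a has haβ using happrox
  set T : ℕ → Set X := fun n => W ∩ E (a n) with hTdef
  set Tstar := ⋃ n, T n with hTs
  have hTm : ∀ n, MeasurableSet (T n) := fun n => hWm.inter (hEm (a n))
  have hTsm : MeasurableSet Tstar := MeasurableSet.iUnion hTm
  have hTsβ : ρ Tstar ≤ β := by
    rw [hTs, measure_iUnion_eq_iSup_accumulate]
    refine iSup_le fun n => ?_
    obtain ⟨u, hu, hle⟩ := directedOn_finset_le hne hdir ((Finset.range (n+1)).image a)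
      (by
        intro x hx
        obtain ⟨k, _, rfl⟩ := Finset.mem_image.mp hx
        exact has k)
    have hau : ∀ k ≤ n, a k ≤ u := fun k hk => hle (a k)
      (Finset.mem_image_of_mem a (Finset.mem_range.mpr (Nat.lt_succ_of_le hk)))
    have hsub : accumulate T n ⊆
        (W ∩ E u) ∪ (⋃ k ∈ Finset.range (n+1), (E (a k) \ E u)) := by
      intro x hx
      obtain ⟨k, hk, hxk⟩ := Set.mem_iUnion₂.mp hx
      by_cases hxu : x ∈ E u
      · exact Or.inl ⟨hxk.1, hxu⟩
      · exact Or.inr (Set.mem_biUnion (Finset.mem_range.mpr (Nat.lt_succ_of_le hk))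
          ⟨hxk.2, hxu⟩)
    have hnull : ρ (⋃ k ∈ Finset.range (n+1), (E (a k) \ E u)) = 0 := by
      refine le_antisymm (le_trans (measure_biUnion_finset_le _ _) ?_) (zero_le)
      refine le_of_eq (Finset.sum_eq_zero fun k hk => ?_)
      exact hρμ (hEmono (a k) u (hau k (Nat.lt_succ_iff.mp (Finset.mem_range.mp hk))))
    calc ρ (accumulate T n)
        ≤ ρ (W ∩ E u) + ρ (⋃ k ∈ Finset.range (n+1), (E (a k) \ E u)) :=
          le_trans (measure_mono hsub) (measure_union_le _ _)
      _ = ρ (W ∩ E u) := by rw [hnull, add_zero]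
      _ ≤ β := le_iSup (fun f : {f : Lp ℝ ∞ μ // f ∈ s} => ρ (W ∩ E f.1)) ⟨u, hu⟩
  have hmax : ∀ f ∈ s, ρ ((W ∩ E f) \ Tstar) = 0 := by
    intro f hf
    by_contra hγ0
    obtain ⟨n, hn⟩ := ENNReal.exists_inv_nat_lt hγ0
    have hn' : ((n : ℝ≥0∞) + 1)⁻¹ < ρ ((W ∩ E f) \ Tstar) :=
      lt_of_le_of_lt (ENNReal.inv_le_inv.mpr (by simp)) hn
    obtain ⟨u, hu, hau, hfu⟩ := hdir (a n) (has n) f hf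
    have hdisj : Disjoint (W ∩ E (a n)) ((W ∩ E f) \ Tstar) :=
      Set.disjoint_left.mpr fun x hx1 hx2 => hx2.2 (Set.mem_iUnion.mpr ⟨n, hx1⟩)
    have hkey : ρ (W ∩ E (a n)) + ρ ((W ∩ E f) \ Tstar) ≤ ρ (W ∩ E u) := by
      rw [← measure_union hdisj ((hWm.inter (hEm f)).diff hTsm)]
      have hsub : (W ∩ E (a n)) ∪ ((W ∩ E f) \ Tstar) ⊆
          (W ∩ E u) ∪ ((E (a n) \ E u) ∪ (E f \ E u)) := by
        rintro x (⟨hxW, hxE⟩ | ⟨⟨hxW, hxE⟩, _⟩)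
        · by_cases hxu : x ∈ E u
          · exact Or.inl ⟨hxW, hxu⟩
          · exact Or.inr (Or.inl ⟨hxE, hxu⟩)
        · by_cases hxu : x ∈ E u
          · exact Or.inl ⟨hxW, hxu⟩
          · exact Or.inr (Or.inr ⟨hxE, hxu⟩)
      refine le_trans (measure_mono hsub) (le_trans (measure_union_le _ _) ?_)
      have h1 : ρ ((E (a n) \ E u) ∪ (E f \ E u)) = 0 :=
        measure_union_null (hρμ (hEmono (a n) u hau)) (hρμ (hEmono f u hfu))
      rw [h1, add_zero]
    have hβu : ρ (W ∩ E u) ≤ β :=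
      le_iSup (fun f : {f : Lp ℝ ∞ μ // f ∈ s} => ρ (W ∩ E f.1)) ⟨u, hu⟩
    have hfinal : β + ρ ((W ∩ E f) \ Tstar) ≤ β + ((n : ℝ≥0∞) + 1)⁻¹ := by
      calc β + ρ ((W ∩ E f) \ Tstar)
          ≤ (ρ (W ∩ E (a n)) + ((n : ℝ≥0∞) + 1)⁻¹) + ρ ((W ∩ E f) \ Tstar) :=
            add_le_add_left (haβ n) _
        _ = (ρ (W ∩ E (a n)) + ρ ((W ∩ E f) \ Tstar)) + ((n : ℝ≥0∞) + 1)⁻¹ := by ring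
        _ ≤ ρ (W ∩ E u) + ((n : ℝ≥0∞) + 1)⁻¹ := add_le_add_left hkey _
        _ ≤ β + ((n : ℝ≥0∞) + 1)⁻¹ := add_le_add_left hβu _
    have hcontr : ρ ((W ∩ E f) \ Tstar) ≤ ((n : ℝ≥0∞) + 1)⁻¹ :=
      (ENNReal.add_le_add_iff_left hβtop).mp hfinal
    exact absurd hcontr (not_le.mpr hn')
  -- the bad set D
  set D := W \ Tstar with hDdef
  have hDm : MeasurableSet D := hWm.diff hTsm
  have hρD : ρ D ≠ 0 := by
    intro h0
    have hWβ : ρ W ≤ β := by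
      calc ρ W = ρ (W ∩ Tstar) + ρ (W \ Tstar) := (measure_inter_add_diff W hTsm).symm
        _ = ρ (W ∩ Tstar) := by rw [show ρ (W \ Tstar) = 0 from h0, add_zero]
        _ ≤ ρ Tstar := measure_mono Set.inter_subset_right
        _ ≤ β := hTsβ
    exact absurd hθ2 (not_lt.mpr (hWβ.trans (hβc'.trans hc'θ.le)))
  have hνD : 0 < ν D := by
    rw [pos_iff_ne_zero]
    intro h0
    exact hρD (hρν h0)
  have hνWEf : ∀ f ∈ s, ν ((W ∩ E f) \ Tstar) = 0 := by
    intro f hf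
    have hAm : MeasurableSet ((W ∩ E f) \ Tstar) := (hWm.inter (hEm f)).diff hTsm
    have hρ0 : ρ ((W ∩ E f) \ Tstar) = 0 := hmax f hf
    have hlow : ENNReal.ofReal δ * ν ((W ∩ E f) \ Tstar) ≤ ρ ((W ∩ E f) \ Tstar) := by
      rw [hρ_apply _ hAm]
      calc ENNReal.ofReal δ * ν ((W ∩ E f) \ Tstar)
          = ∫⁻ _ in (W ∩ E f) \ Tstar, ENNReal.ofReal δ ∂ν := (setLIntegral_const _ _).symm
        _ ≤ ∫⁻ x in (W ∩ E f) \ Tstar, ENNReal.ofReal ((g : X → ℝ) x) ∂ν := by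
            refine setLIntegral_mono hgme fun x hx => ?_
            exact ENNReal.ofReal_le_ofReal (le_of_lt (hx.1.1 : δ < (g : X → ℝ) x))
    rw [hρ0] at hlow
    have h00 : ENNReal.ofReal δ * ν ((W ∩ E f) \ Tstar) = 0 :=
      le_antisymm hlow (zero_le)
    rcases mul_eq_zero.mp h00 with h1 | h2
    · exact absurd h1 (ENNReal.ofReal_pos.mpr hδ).ne'
    · exact h2
  -- the common tail
  have htail : ∀ F, MeasurableSet F → F ⊆ D → μ F < ∞ → 0 < ν F → False := by
    intro F hFm hFD _ hFpos
    set P := F ∩ {x | hdens x ≠ 0} with hPdef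
    have hsetm : MeasurableSet {x | hdens x ≠ 0} := (hdm (measurableSet_singleton 0)).compl
    have hPm : MeasurableSet P := hFm.inter hsetm
    have hPpos : μ P ≠ 0 := by
      intro h0
      have hν0 : ν F = 0 := by
        rw [hdp F hFm]
        refine (setLIntegral_eq_zero_iff hFm hdm).mpr (ae_iff.mpr ?_)
        refine measure_mono_null (fun x hx => ?_) h0
        rw [Set.mem_setOf_eq, _root_.not_imp] at hx
        exact ⟨hx.1, hx.2⟩
      exact absurd hν0 hFpos.ne'
    have hPEf : ∀ f ∈ s, μ (P ∩ E f) = 0 := by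
      intro f hf
      have hsub' : F ∩ E f ⊆ (W ∩ E f) \ Tstar :=
        fun x hx => ⟨⟨(hFD hx.1).1, hx.2⟩, (hFD hx.1).2⟩
      have hν0 : ν (F ∩ E f) = 0 := measure_mono_null hsub' (hνWEf f hf)
      have hFEm : MeasurableSet (F ∩ E f) := hFm.inter (hEm f)
      have hint0 : ∫⁻ x in F ∩ E f, hdens x ∂μ = 0 := by
        rw [← hdp _ hFEm]
        exact hν0
      have hae0 := (setLIntegral_eq_zero_iff hFEm hdm).mp hint0
      have hnull := ae_iff.mp hae0
      refine measure_mono_null (fun x hx => ?_) hnull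
      rw [Set.mem_setOf_eq, _root_.not_imp]
      exact ⟨⟨hx.1.1, hx.2⟩, hx.1.2⟩
    refine absurd (lub_perturbation hlub hε hPm fun f hf => ?_) hPpos
    have himp := ae_imp_of_null (hPEf f hf)
    filter_upwards [himp] with x hx hxP
    exact not_lt.mp (hx hxP)
  -- case split
  rcases hcase with hmu | ⟨hmuS, hinf⟩
  · obtain ⟨F, hFm, hFD, hFfin, hFpos⟩ := hmu D hDm hνD
    exact htail F hFm hFD hFfin hFpos
  · rcases Set.eq_empty_or_nonempty (D ∩ Sᶜ) with hemp | hBne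
    · have hDS : D ⊆ S := by
        intro x hx
        by_contra hxS
        have hxmem : x ∈ D ∩ Sᶜ := ⟨hx, hxS⟩
        rw [hemp] at hxmem
        exact hxmem
      obtain ⟨F, hFm, hFD, hFfin, hFpos⟩ :=
        common_semifinite hSm (Or.inr ⟨hmuS, hinf⟩) D hDm hDS hνD
      exact htail F hFm hFD hFfin hFpos
    · set B := D ∩ Sᶜ with hBdef
      have hBm : MeasurableSet B := hDm.inter hSm.compl
      have hBEf : ∀ f ∈ s, B ∩ E f = ∅ := by
        intro f hf
        by_contra hne'
        have hBEne : (B ∩ E f).Nonempty := Set.nonempty_iff_ne_empty.mpr hne'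
        have h1 : ν (B ∩ E f) = ∞ :=
          hinf (B ∩ E f) (hBm.inter (hEm f)) (fun x hx => hx.1.2) hBEne
        have hsub' : B ∩ E f ⊆ (W ∩ E f) \ Tstar :=
          fun x hx => ⟨⟨hx.1.1.1, hx.2⟩, hx.1.1.2⟩
        have h2 : ν (B ∩ E f) = 0 := measure_mono_null hsub' (hνWEf f hf)
        rw [h1] at h2
        exact absurd h2 (by simp)
      have hμB : μ B = 0 := by
        refine lub_perturbation hlub hε hBm fun f hf => ae_of_all _ fun x hxB => ?_
        have hnot : x ∉ E f := fun hxE =>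
          (hBEf f hf ▸ (⟨hxB, hxE⟩ : x ∈ B ∩ E f) : x ∈ (∅ : Set X))
        exact not_lt.mp hnot
      have hνB : ν B = ∞ := hinf B hBm Set.inter_subset_right hBne
      rw [hac hμB] at hνB
      exact absurd hνB (by simp)

end RNAux6

/-- (Radon–Nikodym for Dedekind measures.) -/
theorem radonNikodym_dedekind
    {X : Type} [MeasurableSpace X] (μ : Measure X) (hμ : Dedekind μ)
    (S : Set X) (hS : IsSemifinitePart μ S)
    (ν : Measure X) (hac : ν ≪ μ)
    (hcase :
      -- (i) `ν` is μ-semifinite, or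
      MuSemifinite μ ν ∨
      -- (ii) `ν` restricted to `S` is `μ|_S`-semifinite and `ν = ∞` on all nonempty
      -- measurable subsets of `X \ S`
      (MuSemifinite (μ.restrict S) (ν.restrict S) ∧
        ∀ E, MeasurableSet E → E ⊆ Sᶜ → E.Nonempty → ν E = ∞)) :
    -- existence of a `[0,∞]`-valued density
    (∃ h : X → ENNReal, Measurable h ∧
      ∀ E, MeasurableSet E → ν E = ∫⁻ x in E, h x ∂μ) ∧
    -- such `h` is necessarily μ-a.e. unique on `S`
    (∀ h₁ h₂ : X → ENNReal, Measurable h₁ → Measurable h₂ →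
      (∀ E, MeasurableSet E → ν E = ∫⁻ x in E, h₁ x ∂μ) →
      (∀ E, MeasurableSet E → ν E = ∫⁻ x in E, h₂ x ∂μ) →
      h₁ =ᵐ[μ.restrict S] h₂) ∧
    -- `ψ_ν` is normal on `L∞(X,Σ,μ)₊`
    NormalWeight μ (psiW μ ν) ∧
    -- (1) `μ ≪ ν` iff `h` may be chosen strictly positive
    (μ ≪ ν ↔ ∃ h : X → ENNReal, Measurable h ∧ (∀ x, 0 < h x) ∧
      ∀ E, MeasurableSet E → ν E = ∫⁻ x in E, h x ∂μ) ∧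
    -- (2) `ν` is semifinite on `S` iff `h` may be chosen finite on `S`
    (Semifinite (ν.restrict S) ↔ ∃ h : X → ENNReal, Measurable h ∧ (∀ x ∈ S, h x < ∞) ∧
      ∀ E, MeasurableSet E → ν E = ∫⁻ x in E, h x ∂μ) := by
  classical
  obtain ⟨hSm, hSsemi, hSinf⟩ := hS
  have hS' : IsSemifinitePart μ S := ⟨hSm, hSsemi, hSinf⟩
  obtain ⟨h₀, h₀m, h₀p⟩ := exists_density_full hμ hS' hac hcase
  refine ⟨⟨h₀, h₀m, h₀p⟩, ?_, psiW_normal hμ hS' hac hcase, ?_, ?_⟩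
  · intro h₁ h₂ hm₁ hm₂ hp₁ hp₂
    exact density_unique_on_part hS' hm₁ hm₂ hp₁ hp₂
  · -- part (1)
    constructor
    · intro hμν
      set Z := {x | h₀ x = 0} with hZ
      have hZm : MeasurableSet Z := h₀m (measurableSet_singleton 0)
      have hνZ : ν Z = 0 := by
        rw [h₀p Z hZm]
        exact (setLIntegral_eq_zero_iff hZm h₀m).mpr (ae_of_all _ fun x hx => hx)
      have hμZ : μ Z = 0 := hμν hνZ
      refine ⟨fun x => if h₀ x = 0 then 1 else h₀ x,
        Measurable.ite hZm measurable_const h₀m, ?_, ?_⟩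
      · intro x
        show (0 : ℝ≥0∞) < if h₀ x = 0 then 1 else h₀ x
        by_cases hx : h₀ x = 0
        · rw [if_pos hx]; exact zero_lt_one
        · rw [if_neg hx]; exact pos_iff_ne_zero.mpr hx
      · intro E hE
        rw [h₀p E hE]
        have hdiff : ∀ᵐ x ∂μ, (if h₀ x = 0 then (1 : ℝ≥0∞) else h₀ x) = h₀ x := by
          refine ae_iff.mpr (measure_mono_null (fun x hx => ?_) hμZ)
          by_contra hxZ
          exact hx (if_neg hxZ)
        exact (lintegral_congr_ae (ae_restrict_of_ae hdiff)).symm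
    · rintro ⟨h, hm, hpos, hp⟩
      refine Measure.AbsolutelyContinuous.mk fun E hE hνE => ?_
      rw [hp E hE] at hνE
      have hae0 := (setLIntegral_eq_zero_iff hE hm).mp hνE
      have h0 := ae_iff.mp hae0
      refine measure_mono_null (fun x hx => ?_) h0
      rw [Set.mem_setOf_eq, _root_.not_imp]
      exact ⟨hx, (hpos x).ne'⟩
  · -- part (2)
    constructor
    · intro hsemi
      set I := S ∩ {x | h₀ x = ∞} with hI
      have hIm : MeasurableSet I := hSm.inter (h₀m (measurableSet_singleton ∞))
      have hμI : μ I = 0 := by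
        by_contra hne
        obtain ⟨F, hFm, hFI, hFpos, hFfin⟩ := exists_pos_finite_subset hSsemi hSm hIm
          Set.inter_subset_left (pos_iff_ne_zero.mpr hne)
        have hFS : F ⊆ S := hFI.trans Set.inter_subset_left
        have hνF : ν F = ∞ := by
          rw [h₀p F hFm]
          have heq : ∫⁻ x in F, h₀ x ∂μ = ∫⁻ _ in F, (∞ : ℝ≥0∞) ∂μ :=
            setLIntegral_congr_fun hFm (fun x hx => (hFI hx).2)
          rw [heq, setLIntegral_const, ENNReal.top_mul hFpos.ne']
        have hres : ν.restrict S F = ∞ := by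
          rw [restrict_eq_self_of_subset_of_meas hSm hFS]
          exact hνF
        obtain ⟨G, hGm, hGF, hGpos, hGfin⟩ := hsemi F hFm hres
        have hGS : G ⊆ S := hGF.trans hFS
        rw [restrict_eq_self_of_subset_of_meas hSm hGS] at hGpos hGfin
        have hνG : ν G = ∞ * μ G := by
          rw [h₀p G hGm]
          have heq : ∫⁻ x in G, h₀ x ∂μ = ∫⁻ _ in G, (∞ : ℝ≥0∞) ∂μ :=
            setLIntegral_congr_fun hGm (fun x hx => (hFI (hGF hx)).2)
          rw [heq, setLIntegral_const]
        rcases eq_or_ne (μ G) 0 with h0 | h0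
        · rw [h0, mul_zero] at hνG
          exact absurd hνG hGpos.ne'
        · rw [ENNReal.top_mul h0] at hνG
          exact absurd hνG hGfin.ne
      refine ⟨fun x => if x ∈ I then 0 else h₀ x,
        Measurable.ite hIm measurable_const h₀m, ?_, ?_⟩
      · intro x hxS
        show (if x ∈ I then (0 : ℝ≥0∞) else h₀ x) < ∞
        by_cases hx : x ∈ I
        · rw [if_pos hx]
          exact ENNReal.zero_lt_top
        · rw [if_neg hx]
          rcases eq_or_ne (h₀ x) ∞ with he | he
          · exact absurd (⟨hxS, he⟩ : x ∈ I) hx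
          · exact lt_top_iff_ne_top.mpr he
      · intro E hE
        rw [h₀p E hE]
        have hdiff : ∀ᵐ x ∂μ, (if x ∈ I then (0 : ℝ≥0∞) else h₀ x) = h₀ x := by
          refine ae_iff.mpr (measure_mono_null (fun x hx => ?_) hμI)
          by_contra hxI
          exact hx (if_neg hxI)
        exact (lintegral_congr_ae (ae_restrict_of_ae hdiff)).symm
    · rintro ⟨h, hm, hfin, hp⟩
      intro E hEm hEinf
      rw [Measure.restrict_apply' hSm] at hEinf
      set E' := E ∩ S with hE'
      have hE'm : MeasurableSet E' := hEm.inter hSm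
      have hE'S : E' ⊆ S := Set.inter_subset_right
      set A : ℕ → Set X := fun n => E' ∩ {x | h x ≤ (n : ℝ≥0∞)} with hA
      have hAm : ∀ n, MeasurableSet (A n) :=
        fun n => hE'm.inter (measurableSet_le hm measurable_const)
      have hAmono : Monotone A := by
        intro m n hmn x hx
        have hcast : (m : ℝ≥0∞) ≤ (n : ℝ≥0∞) := by exact_mod_cast hmn
        exact ⟨hx.1, le_trans hx.2 hcast⟩
      have hAcup : (⋃ n, A n) = E' := by
        apply Set.Subset.antisymm
        · exact Set.iUnion_subset fun n => Set.inter_subset_left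
        · intro x hx
          have hxfin : h x < ∞ := hfin x (hE'S hx)
          obtain ⟨n, hn⟩ := ENNReal.exists_nat_gt hxfin.ne
          exact Set.mem_iUnion.mpr ⟨n, hx, hn.le⟩
      have hsup : (⨆ n, ν (A n)) = ∞ := by
        rw [← hAmono.measure_iUnion, hAcup]
        exact hEinf
      have hex : ∃ n, 0 < ν (A n) := by
        by_contra hcon
        push_neg at hcon
        have : (⨆ n, ν (A n)) = 0 := by
          refine le_antisymm (iSup_le fun n => hcon n) (zero_le)
        rw [this] at hsup
        exact absurd hsup (by simp)
      obtain ⟨n, hn⟩ := hex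
      have hνA : ν (A n) = ∫⁻ x in A n, h x ∂μ := hp (A n) (hAm n)
      -- find a level m with positive measure
      have hpos' : 0 < μ (A n ∩ {x | 0 < h x}) := by
        by_contra hcon
        push_neg at hcon
        have h0 : μ (A n ∩ {x | 0 < h x}) = 0 := le_antisymm hcon (zero_le)
        have hz : ∫⁻ x in A n, h x ∂μ = 0 := by
          refine (setLIntegral_eq_zero_iff (hAm n) hm).mpr (ae_iff.mpr ?_)
          refine measure_mono_null (fun x hx => ?_) h0
          rw [Set.mem_setOf_eq, _root_.not_imp] at hx
          exact ⟨hx.1, pos_iff_ne_zero.mpr hx.2⟩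
        rw [hνA, hz] at hn
        exact absurd hn (by simp)
      have hcover : A n ∩ {x | 0 < h x} ⊆
          ⋃ m : ℕ, A n ∩ {x | ((m : ℝ≥0∞) + 1)⁻¹ < h x} := by
        rintro x ⟨hxA, hx⟩
        obtain ⟨m, hm'⟩ := ENNReal.exists_inv_nat_lt (ne_of_gt hx)
        refine Set.mem_iUnion.mpr ⟨m, hxA, lt_of_le_of_lt ?_ hm'⟩
        exact ENNReal.inv_le_inv.mpr (by simp)
      have hexm : ∃ m : ℕ, 0 < μ (A n ∩ {x | ((m : ℝ≥0∞) + 1)⁻¹ < h x}) := by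
        by_contra hcon
        push_neg at hcon
        have hz : μ (⋃ m : ℕ, A n ∩ {x | ((m : ℝ≥0∞) + 1)⁻¹ < h x}) = 0 :=
          measure_iUnion_null fun m => le_antisymm (hcon m) (zero_le)
        exact absurd (measure_mono_null hcover hz) (ne_of_gt hpos')
      obtain ⟨m, hmpos⟩ := hexm
      set D := A n ∩ {x | ((m : ℝ≥0∞) + 1)⁻¹ < h x} with hD
      have hDm : MeasurableSet D := (hAm n).inter (measurableSet_lt measurable_const hm)
      have hDS : D ⊆ S := Set.inter_subset_left.trans (Set.inter_subset_left.trans hE'S)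
      obtain ⟨F, hFm, hFD, hFpos, hFfin⟩ :=
        exists_pos_finite_subset hSsemi hSm hDm hDS hmpos
      have hFS : F ⊆ S := hFD.trans hDS
      have hFE : F ⊆ E := hFD.trans (Set.inter_subset_left.trans
        (Set.inter_subset_left.trans Set.inter_subset_left))
      have hνF : ν F = ∫⁻ x in F, h x ∂μ := hp F hFm
      have hlow : ((m : ℝ≥0∞) + 1)⁻¹ * μ F ≤ ν F := by
        rw [hνF]
        calc ((m : ℝ≥0∞) + 1)⁻¹ * μ F = ∫⁻ _ in F, ((m : ℝ≥0∞) + 1)⁻¹ ∂μ :=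
              (setLIntegral_const _ _).symm
          _ ≤ ∫⁻ x in F, h x ∂μ :=
              setLIntegral_mono hm fun x hx => le_of_lt (hFD hx).2
      have hhigh : ν F ≤ (n : ℝ≥0∞) * μ F := by
        rw [hνF]
        calc ∫⁻ x in F, h x ∂μ ≤ ∫⁻ _ in F, (n : ℝ≥0∞) ∂μ :=
              setLIntegral_mono measurable_const fun x hx => (hFD hx).1.2
          _ = (n : ℝ≥0∞) * μ F := setLIntegral_const _ _
      refine ⟨F, hFm, hFE, ?_, ?_⟩
      · rw [restrict_eq_self_of_subset_of_meas hSm hFS]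
        refine lt_of_lt_of_le ?_ hlow
        refine ENNReal.mul_pos ?_ hFpos.ne'
        simp
      · rw [restrict_eq_self_of_subset_of_meas hSm hFS]
        refine lt_of_le_of_lt hhigh ?_
        exact ENNReal.mul_lt_top (by simp) hFfin
end
end

section
/- Let K be a compact Hausdorff space such that every bounded increasing net of positive elements of C(K) has a supremum (in the pointwise order of continuous real-valued functions). Then K is Stonean, i.e. extremally disconnected (the closure of every open subset of K is open), and the linear span of the idempotents of C(K) (the indicator functions of clopen subsets of K) is norm-dense in C(K). -/
noncomputable section

/-- Let `K` be a compact Hausdorff space such that every bounded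
increasing net (equivalently, upward-directed set) of positive elements of `C(K)` has a
supremum in the pointwise order.  Then `K` is Stonean, i.e. extremally disconnected,
and the linear span of the idempotents of `C(K)` (indicator functions of clopen sets)
is norm-dense in `C(K)`. -/
theorem stonean_of_monotone_complete
    {K : Type} [TopologicalSpace K] [CompactSpace K] [T2Space K]
    (hsup : ∀ s : Set C(K, ℝ), s.Nonempty → DirectedOn (· ≤ ·) s →
      (∀ f ∈ s, 0 ≤ f) → (∃ C : ℝ, ∀ f ∈ s, ‖f‖ ≤ C) → ∃ b, IsLUB s b) :
    ExtremallyDisconnected K ∧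
    Dense ((Submodule.span ℂ {f : C(K, ℂ) | IsIdempotentElem f} :
      Submodule ℂ C(K, ℂ)) : Set C(K, ℂ)) := by
  classical
  have hED : ExtremallyDisconnected K := by
    constructor
    intro U hU
    set s : Set C(K, ℝ) :=
      {f | (∀ x, f x ∈ Set.Icc (0 : ℝ) 1) ∧ ∀ x ∉ U, f x = 0} with hsdef
    have h0 : (0 : C(K, ℝ)) ∈ s :=
      ⟨fun x => ⟨le_refl 0, zero_le_one⟩, fun x _ => rfl⟩
    have hdir : DirectedOn (· ≤ ·) s := by
      rintro f hf g hg
      refine ⟨f ⊔ g, ⟨fun x => ?_, fun x hx => ?_⟩, le_sup_left, le_sup_right⟩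
      · refine ⟨le_trans (hf.1 x).1 ?_, ?_⟩
        · exact le_sup_left.trans_eq (ContinuousMap.sup_apply f g x).symm
        · rw [ContinuousMap.sup_apply]
          exact sup_le (hf.1 x).2 (hg.1 x).2
      · rw [ContinuousMap.sup_apply, hf.2 x hx, hg.2 x hx, sup_idem]
    have hpos : ∀ f ∈ s, (0 : C(K, ℝ)) ≤ f := fun f hf =>
      ContinuousMap.le_def.2 fun x => (hf.1 x).1
    have hbdd : ∃ C : ℝ, ∀ f ∈ s, ‖f‖ ≤ C := by
      refine ⟨1, fun f hf => (ContinuousMap.norm_le f zero_le_one).2 fun x => ?_⟩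
      rw [Real.norm_eq_abs, abs_of_nonneg (hf.1 x).1]
      exact (hf.1 x).2
    obtain ⟨b, hb⟩ := hsup s ⟨0, h0⟩ hdir hpos hbdd
    have hb0 : (0 : C(K, ℝ)) ≤ b := hb.1 h0
    have hble1 : b ≤ 1 :=
      hb.2 fun g hg => ContinuousMap.le_def.2 fun y => (hg.1 y).2
    have hbU : ∀ x ∈ U, b x = 1 := by
      intro x hx
      obtain ⟨f, hf0, hf1, hf01⟩ :=
        exists_continuous_zero_one_of_isClosed (isClosed_compl_iff.2 hU)
          isClosed_singleton (by simpa [Set.disjoint_singleton_right] using hx)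
      have hfs : f ∈ s := ⟨hf01, fun y hy => hf0 hy⟩
      have h1 : f x ≤ b x := ContinuousMap.le_def.1 (hb.1 hfs) x
      have h2 : b x ≤ 1 := ContinuousMap.le_def.1 hble1 x
      have h3 : f x = 1 := hf1 rfl
      linarith
    have hbclU : Set.EqOn (⇑b) (fun _ => (1 : ℝ)) (closure U) := by
      refine Set.EqOn.closure (fun x hx => hbU x hx) b.continuous continuous_const
    have hout : ∀ x ∉ closure U, b x = 0 := by
      intro x hx
      obtain ⟨h, hh0, hh1, hh01⟩ :=
        exists_continuous_zero_one_of_isClosed isClosed_singleton isClosed_closure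
          (by simpa [Set.disjoint_singleton_left] using hx)
      have hub : h ∈ upperBounds s := by
        intro f hf
        refine ContinuousMap.le_def.2 fun y => ?_
        by_cases hy : y ∈ U
        · rw [hh1 (subset_closure hy)]; exact (hf.1 y).2
        · rw [hf.2 y hy]; exact (hh01 y).1
      have h1 : b x ≤ h x := ContinuousMap.le_def.1 (hb.2 hub) x
      have h2 : h x = 0 := hh0 rfl
      have h3 : (0 : ℝ) ≤ b x := ContinuousMap.le_def.1 hb0 x
      linarith
    have hkey : closure U = ⇑b ⁻¹' Set.Ioi (1 / 2 : ℝ) := by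
      ext y
      constructor
      · intro hy
        have := hbclU hy
        simp only [Set.mem_preimage, Set.mem_Ioi, this]
        norm_num
      · intro hy
        by_contra h'
        rw [Set.mem_preimage, Set.mem_Ioi, hout y h'] at hy
        norm_num at hy
    rw [hkey]
    exact isOpen_Ioi.preimage b.continuous
  refine ⟨hED, ?_⟩
  -- Part 2: density of the span of idempotents.
  set S : Set C(K, ℂ) := {f : C(K, ℂ) | IsIdempotentElem f} with hSdef
  have h1S : (1 : C(K, ℂ)) ∈ S := by
    simp [hSdef, IsIdempotentElem]
  have hmulS : ∀ f ∈ S, ∀ g ∈ S, f * g ∈ S := by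
    intro f hf g hg
    have : (f * g) * (f * g) = (f * f) * (g * g) := by ring
    simp [hSdef, IsIdempotentElem, this, hf.eq, hg.eq]
  set p : Submodule ℂ C(K, ℂ) := Submodule.span ℂ S with hpdef
  have hmul : ∀ x ∈ p, ∀ y ∈ p, x * y ∈ p := by
    intro x hx y hy
    induction hx using Submodule.span_induction with
    | mem f hf =>
      induction hy using Submodule.span_induction with
      | mem g hg => exact Submodule.subset_span (hmulS f hf g hg)
      | zero => simp
      | add a b _ _ ha hb => rw [mul_add]; exact add_mem ha hb
      | smul c a _ ha => rw [mul_smul_comm]; exact Submodule.smul_mem _ _ ha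
    | zero => simp
    | add a b _ _ ha hb => rw [add_mul]; exact add_mem ha hb
    | smul c a _ ha => rw [smul_mul_assoc]; exact Submodule.smul_mem _ _ ha
  have hstar : ∀ x ∈ p, star x ∈ p := by
    intro x hx
    induction hx using Submodule.span_induction with
    | mem f hf =>
      refine Submodule.subset_span ?_
      show IsIdempotentElem (star f)
      rw [IsIdempotentElem, ← star_mul, hf.eq]
    | zero => simp
    | add a b _ _ ha hb => rw [star_add]; exact add_mem ha hb
    | smul c a _ ha => rw [star_smul]; exact Submodule.smul_mem _ _ ha
  let A : Subalgebra ℂ C(K, ℂ) := p.toSubalgebra (Submodule.subset_span h1S) (fun x y hx hy => hmul x hx y hy)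
  let B : StarSubalgebra ℂ C(K, ℂ) := { A with star_mem' := fun {x} hx => hstar x hx }
  have hsep : B.SeparatesPoints := by
    intro x y hxy
    obtain ⟨C, hC, hxC, hyC⟩ := exists_isClopen_of_totally_separated hxy
    have hyC' : y ∉ C := hyC
    let f : C(K, ℂ) := ⟨fun z => if z ∈ C then (1 : ℂ) else 0, by
      apply Continuous.if
      · intro a ha
        rw [show {x | x ∈ C} = C from rfl] at ha
        rw [hC.frontier_eq] at ha
        exact absurd ha (Set.notMem_empty a)
      · exact continuous_const
      · exact continuous_const⟩
    have hfS : f ∈ S := by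
      show f * f = f
      ext z
      by_cases hz : z ∈ C <;> simp [f, ContinuousMap.mul_apply, hz]
    refine ⟨_, ⟨f, Submodule.subset_span hfS, rfl⟩, ?_⟩
    simp only [f, ContinuousMap.coe_mk]
    rw [if_pos hxC, if_neg hyC']
    norm_num
  have htop := ContinuousMap.starSubalgebra_topologicalClosure_eq_top_of_separatesPoints B hsep
  have hclosure : closure (B : Set C(K, ℂ)) = Set.univ := by
    have := congrArg (fun (T : StarSubalgebra ℂ C(K, ℂ)) => (T : Set C(K, ℂ))) htop
    simpa [StarSubalgebra.topologicalClosure_coe] using this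
  have hBp : (B : Set C(K, ℂ)) = (p : Set C(K, ℂ)) := rfl
  rw [dense_iff_closure_eq, ← hBp, hclosure]
end
end

section
/- Every Radon measure space is decomposable: if (X,𝔗,Σ,μ) is a Radon measure space, then X admits a partition into measurable sets X_t of finite measure such that a set E ⊆ X belongs to Σ if and only if E ∩ X_t ∈ Σ for all t, and μ(E) = Σ_t μ(E ∩ X_t) for every E ∈ Σ. -/
open MeasureTheory

noncomputable section

namespace Paper

/-- A *Radon measure space* in the sense of Fremlin: `(X, 𝔗, Σ, μ)` where
(i) `μ` is complete; (ii) `Σ` is locally determined by the sets of finite measure;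
(iii) the topology is Hausdorff; (iv) open sets are measurable; (v) `μ` is inner
regular with respect to compact sets; (vi) `μ` is locally finite. -/
def IsRadonMS (X : Type) [TopologicalSpace X] [MeasurableSpace X]
    (μ : Measure X) : Prop :=
  (∀ s : Set X, μ s = 0 → MeasurableSet s) ∧
  (∀ E : Set X, (∀ F, MeasurableSet F → μ F < ⊤ → MeasurableSet (E ∩ F)) →
    MeasurableSet E) ∧
  T2Space X ∧
  (∀ U : Set X, IsOpen U → MeasurableSet U) ∧
  (∀ E, MeasurableSet E → μ E = ⨆ (C : Set X) (_ : IsCompact C) (_ : C ⊆ E), μ C) ∧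
  (∀ x : X, ∃ U : Set X, IsOpen U ∧ x ∈ U ∧ μ U < ⊤)

/-- A measure space is *decomposable* (strictly localizable) if it admits a partition
into measurable sets of finite measure which determines both the σ-algebra and the
measure. -/
def Decomposable {Y : Type} [MeasurableSpace Y] (ν : Measure Y) : Prop :=
  ∃ (ι : Type) (A : ι → Set Y),
    (∀ i, MeasurableSet (A i)) ∧ Pairwise (Function.onFun Disjoint A) ∧
    (⋃ i, A i) = Set.univ ∧ (∀ i, ν (A i) < ⊤) ∧
    (∀ E : Set Y, (∀ i, MeasurableSet (E ∩ A i)) ↔ MeasurableSet E) ∧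
    (∀ E, MeasurableSet E → ν E = ∑' i, ν (E ∩ A i))

end Paper

open Paper

section Aux

open Set

variable {X : Type} [TopologicalSpace X] [MeasurableSpace X]

/-- A set `K` is *self-supporting* if every open set meeting it meets it in a set of
positive measure. -/
def SelfSupp (μ : Measure X) (K : Set X) : Prop :=
  ∀ U : Set X, IsOpen U → (U ∩ K).Nonempty → 0 < μ (U ∩ K)

end Aux

open Set in
/-- Every Radon measure space is decomposable. -/
theorem radon_decomposable
    {X : Type} [TopologicalSpace X] [MeasurableSpace X] (μ : Measure X)
    (h : IsRadonMS X μ) : Decomposable μ := by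
  obtain ⟨h1, h2, h3, h4, h5, h6⟩ := h
  haveI : T2Space X := h3
  haveI : IsLocallyFiniteMeasure μ := ⟨fun x => by
    obtain ⟨U, hU, hxU, hμU⟩ := h6 x
    exact ⟨U, hU.mem_nhds hxU, hμU⟩⟩
  -- closed sets are measurable
  have measClosed : ∀ {C : Set X}, IsClosed C → MeasurableSet C := by
    intro C hC
    simpa using (h4 _ hC.isOpen_compl).compl
  -- inner regularity: positive measure sets contain compact sets of positive measure
  have innerPos : ∀ E, MeasurableSet E → 0 < μ E →
      ∃ C, IsCompact C ∧ C ⊆ E ∧ 0 < μ C := by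
    intro E hE hpos
    by_contra hcon
    push_neg at hcon
    have : μ E = 0 := by
      rw [h5 E hE]
      refine le_antisymm (iSup_le fun C => iSup_le fun hC => iSup_le fun hCE => ?_)
        (zero_le)
      exact hcon C hC hCE
    exact hpos.ne' this
  -- self-supporting core of a compact set of positive measure
  have core : ∀ C, IsCompact C → 0 < μ C →
      ∃ D, D ⊆ C ∧ IsCompact D ∧ SelfSupp μ D ∧ 0 < μ D := by
    intro C hC hCpos
    set 𝒰 : Set (Set X) := {U : Set X | IsOpen U ∧ μ (U ∩ C) = 0} with h𝒰
    set V : Set X := ⋃₀ 𝒰 with hVdef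
    have hVopen : IsOpen V := isOpen_sUnion fun U hU => hU.1
    have hCmeas : MeasurableSet C := measClosed hC.isClosed
    have hVC : μ (V ∩ C) = 0 := by
      have hmeas : MeasurableSet (V ∩ C) := (h4 V hVopen).inter hCmeas
      rw [h5 _ hmeas]
      refine le_antisymm (iSup_le fun D => iSup_le fun hD => iSup_le fun hDsub => ?_)
        (zero_le)
      have hDV : D ⊆ ⋃ U : 𝒰, (U : Set X) := by
        rw [← sUnion_eq_iUnion]
        exact hDsub.trans inter_subset_left
      obtain ⟨t, ht⟩ := hD.elim_finite_subcover (fun U : 𝒰 => (U : Set X))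
        (fun U => U.2.1) hDV
      have hsub : D ⊆ ⋃ U ∈ t, ((U : Set X) ∩ C) := by
        intro x hx
        obtain ⟨U, hUt, hxU⟩ := mem_iUnion₂.1 (ht hx)
        exact mem_iUnion₂.2 ⟨U, hUt, hxU, (hDsub hx).2⟩
      calc μ D ≤ μ (⋃ U ∈ t, ((U : Set X) ∩ C)) := measure_mono hsub
        _ ≤ ∑ U ∈ t, μ ((U : Set X) ∩ C) := measure_biUnion_finset_le t _
        _ = 0 := Finset.sum_eq_zero fun U _ => U.2.2
    refine ⟨C \ V, diff_subset, hC.diff hVopen, ?_, ?_⟩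
    · intro U hU hne
      by_contra hzero
      push_neg at hzero
      have hz : μ (U ∩ (C \ V)) = 0 := le_antisymm hzero (zero_le)
      have hUC : μ (U ∩ C) = 0 := by
        have hsplit : U ∩ C ⊆ (U ∩ (C \ V)) ∪ (V ∩ C) := by
          intro x hx
          by_cases hxV : x ∈ V
          · exact Or.inr ⟨hxV, hx.2⟩
          · exact Or.inl ⟨hx.1, hx.2, hxV⟩
        refine le_antisymm ?_ (zero_le)
        calc μ (U ∩ C) ≤ μ ((U ∩ (C \ V)) ∪ (V ∩ C)) := measure_mono hsplit
          _ ≤ μ (U ∩ (C \ V)) + μ (V ∩ C) := measure_union_le _ _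
          _ = 0 := by rw [hz, hVC, add_zero]
      have hUV : U ⊆ V := subset_sUnion_of_mem ⟨hU, hUC⟩
      obtain ⟨x, hxU, hxC, hxV⟩ := hne
      exact hxV (hUV hxU)
    · have hle : μ C ≤ μ (C ∩ V) + μ (C \ V) := measure_le_inter_add_diff μ C V
      have : μ (C ∩ V) = 0 := by rwa [inter_comm] at hVC
      rw [this, zero_add] at hle
      exact lt_of_lt_of_le hCpos hle
  -- Zorn: maximal disjoint family of self-supporting compacts of positive measure
  obtain ⟨𝒦, h𝒦⟩ := zorn_subset
    {𝒜 : Set (Set X) | (∀ K ∈ 𝒜, IsCompact K ∧ SelfSupp μ K ∧ 0 < μ K) ∧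
      𝒜.PairwiseDisjoint id}
    (by
      intro c hc hchain
      refine ⟨⋃₀ c, ⟨?_, ?_⟩, fun s hs => subset_sUnion_of_mem hs⟩
      · rintro K ⟨𝒜, h𝒜c, hK𝒜⟩
        exact (hc h𝒜c).1 K hK𝒜
      · rintro K ⟨𝒜₁, h𝒜₁, hK₁⟩ L ⟨𝒜₂, h𝒜₂, hL₂⟩ hne
        rcases hchain.total h𝒜₁ h𝒜₂ with hsub | hsub
        · exact (hc h𝒜₂).2 (hsub hK₁) hL₂ hne
        · exact (hc h𝒜₁).2 hK₁ (hsub hL₂) hne)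
  have Kgood : ∀ K ∈ 𝒦, IsCompact K ∧ SelfSupp μ K ∧ 0 < μ K := h𝒦.prop.1
  have Kdisj : 𝒦.PairwiseDisjoint id := h𝒦.prop.2
  have measK : ∀ K : ↥𝒦, MeasurableSet (K : Set X) :=
    fun K => measClosed (Kgood K K.2).1.isClosed
  -- maximality
  have Kmax : ∀ C : Set X, IsCompact C → SelfSupp μ C → 0 < μ C →
      (∀ K ∈ 𝒦, Disjoint K C) → C ∈ 𝒦 := by
    intro C hCc hCss hCpos hdisj
    have hmem : insert C 𝒦 ∈ {𝒜 : Set (Set X) |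
        (∀ K ∈ 𝒜, IsCompact K ∧ SelfSupp μ K ∧ 0 < μ K) ∧ 𝒜.PairwiseDisjoint id} := by
      constructor
      · rintro K (rfl | hK)
        · exact ⟨hCc, hCss, hCpos⟩
        · exact Kgood K hK
      · refine Set.PairwiseDisjoint.insert Kdisj ?_
        intro K hK _
        exact (hdisj K hK).symm
    have := h𝒦.2 hmem (subset_insert C 𝒦)
    exact this (mem_insert C 𝒦)
  -- every compact set has finite measure
  have cptFin : ∀ C : Set X, IsCompact C → μ C < ⊤ := fun C hC => hC.measure_lt_top
  -- Key lemma: a measurable set null on every K ∈ 𝒦 is null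
  have L1 : ∀ E, MeasurableSet E → (∀ K ∈ 𝒦, μ (E ∩ K) = 0) → μ E = 0 := by
    intro E hE hnull
    by_contra h0
    have hpos : 0 < μ E := pos_iff_ne_zero.mpr h0
    obtain ⟨C, hCcpt, hCE, hCpos⟩ := innerPos E hE hpos
    obtain ⟨U, hCU, hUopen, hUfin⟩ := hCcpt.exists_open_superset_measure_lt_top μ
    have hcnt : Set.Countable {K : ↥𝒦 | 0 < μ ((K : Set X) ∩ U)} := by
      refine Measure.countable_meas_pos_of_disjoint_of_meas_iUnion_ne_top μ
        (As := fun K : ↥𝒦 => (K : Set X) ∩ U)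
        (fun K => (measK K).inter (h4 U hUopen)) ?_ ?_
      · intro K L hne
        have : (K : Set X) ≠ (L : Set X) := fun hco => hne (Subtype.coe_injective hco)
        exact ((Kdisj K.2 L.2 this).mono inter_subset_left inter_subset_left)
      · exact ne_top_of_le_ne_top hUfin.ne
          (measure_mono (iUnion_subset fun K => inter_subset_right))
    set S : Set ↥𝒦 := {K : ↥𝒦 | ((K : Set X) ∩ C).Nonempty} with hSdef
    have hScnt : S.Countable := by
      refine hcnt.mono fun K hK => ?_
      obtain ⟨x, hxK, hxC⟩ := hK
      exact (Kgood K K.2).2.1 U hUopen ⟨x, hCU hxC, hxK⟩ |>.trans_eq (by rw [inter_comm])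
    set N : Set X := ⋃ K ∈ S, (C ∩ (K : Set X)) with hNdef
    have hNmeas : MeasurableSet N :=
      MeasurableSet.biUnion hScnt fun K _ => (measClosed hCcpt.isClosed).inter (measK K)
    have hNnull : μ N = 0 := by
      refine (measure_biUnion_null_iff hScnt).2 fun K _ => ?_
      refine le_antisymm ?_ (zero_le)
      calc μ (C ∩ (K : Set X)) ≤ μ (E ∩ (K : Set X)) :=
            measure_mono (inter_subset_inter_left _ hCE)
        _ = 0 := hnull K K.2
    have hCNpos : 0 < μ (C \ N) := by
      have hle : μ C ≤ μ (C ∩ N) + μ (C \ N) := measure_le_inter_add_diff μ C N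
      have : μ (C ∩ N) = 0 := le_antisymm ((measure_mono inter_subset_right).trans hNnull.le)
        (zero_le)
      rw [this, zero_add] at hle
      exact lt_of_lt_of_le hCpos hle
    obtain ⟨C', hC'cpt, hC'sub, hC'pos⟩ :=
      innerPos (C \ N) ((measClosed hCcpt.isClosed).diff hNmeas) hCNpos
    obtain ⟨D, hDsub, hDcpt, hDss, hDpos⟩ := core C' hC'cpt hC'pos
    have hDdisj : ∀ K ∈ 𝒦, Disjoint K D := by
      intro K hK
      rw [Set.disjoint_right]
      intro x hxD hxK
      have hxCN : x ∈ C \ N := hC'sub (hDsub hxD)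
      have hKS : (⟨K, hK⟩ : ↥𝒦) ∈ S := ⟨x, hxK, hxCN.1⟩
      exact hxCN.2 (mem_biUnion hKS ⟨hxCN.1, hxK⟩)
    have hD𝒦 : D ∈ 𝒦 := Kmax D hDcpt hDss hDpos hDdisj
    have hDempty : D = ∅ := by simpa using disjoint_self.mp (hDdisj D hD𝒦)
    rw [hDempty] at hDpos
    simp at hDpos
  -- sets of finite measure: countably many K charge them
  have hcntE : ∀ E : Set X, MeasurableSet E → μ E ≠ ⊤ →
      Set.Countable {K : ↥𝒦 | μ (E ∩ (K : Set X)) ≠ 0} := by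
    intro E hE hfin
    have := Measure.countable_meas_pos_of_disjoint_of_meas_iUnion_ne_top μ
      (As := fun K : ↥𝒦 => E ∩ (K : Set X))
      (fun K => hE.inter (measK K))
      (by
        intro K L hne
        have : (K : Set X) ≠ (L : Set X) := fun hco => hne (Subtype.coe_injective hco)
        exact ((Kdisj K.2 L.2 this).mono inter_subset_right inter_subset_right))
      (ne_top_of_le_ne_top hfin (measure_mono (iUnion_subset fun K => inter_subset_left)))
    refine this.mono fun K hK => pos_iff_ne_zero.mpr hK
  -- residual null lemma
  have residual : ∀ E : Set X, MeasurableSet E → ∀ S : Set ↥𝒦, S.Countable →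
      {K : ↥𝒦 | μ (E ∩ (K : Set X)) ≠ 0} ⊆ S →
      μ (E \ ⋃ K ∈ S, (K : Set X)) = 0 := by
    intro E hE S hScnt hsub
    have hBmeas : MeasurableSet (⋃ K ∈ S, (K : Set X)) :=
      MeasurableSet.biUnion hScnt fun K _ => measK K
    refine L1 _ (hE.diff hBmeas) ?_
    intro K hK
    by_cases hKS : (⟨K, hK⟩ : ↥𝒦) ∈ S
    · have : (E \ ⋃ K ∈ S, (K : Set X)) ∩ K = ∅ := by
        ext x
        simp only [mem_inter_iff, mem_diff, mem_empty_iff_false, iff_false]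
        rintro ⟨⟨_, hxB⟩, hxK⟩
        exact hxB (mem_biUnion hKS hxK)
      rw [this]; exact measure_empty
    · have hzero : μ (E ∩ (K : Set X)) = 0 := by
        by_contra hne
        exact hKS (hsub hne)
      refine le_antisymm ?_ (zero_le)
      calc μ ((E \ ⋃ K ∈ S, (K : Set X)) ∩ K) ≤ μ (E ∩ (K : Set X)) :=
            measure_mono (inter_subset_inter_left _ diff_subset)
        _ = 0 := hzero
  -- main sum formula
  have L2 : ∀ E, MeasurableSet E → μ E = ∑' K : ↥𝒦, μ (E ∩ (K : Set X)) := by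
    intro E hE
    by_cases hScnt : Set.Countable {K : ↥𝒦 | μ (E ∩ (K : Set X)) ≠ 0}
    · set S := {K : ↥𝒦 | μ (E ∩ (K : Set X)) ≠ 0} with hSdef
      set B : Set X := ⋃ K ∈ S, (K : Set X) with hBdef
      have hBmeas : MeasurableSet B := MeasurableSet.biUnion hScnt fun K _ => measK K
      have hEB : E ∩ B = ⋃ K ∈ S, (E ∩ (K : Set X)) := by
        rw [hBdef, inter_iUnion₂]
      have hsum : μ (E ∩ B) = ∑' K : S, μ (E ∩ ((K : ↥𝒦) : Set X)) := by
        rw [hEB]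
        refine measure_biUnion hScnt ?_ fun K _ => hE.inter (measK K)
        intro K hK L hL hne
        have : ((K : ↥𝒦) : Set X) ≠ ((L : ↥𝒦) : Set X) :=
          fun hco => hne (Subtype.coe_injective hco)
        exact ((Kdisj (K : ↥𝒦).2 (L : ↥𝒦).2 this).mono inter_subset_right
          inter_subset_right)
      have htsub : ∑' K : S, μ (E ∩ ((K : ↥𝒦) : Set X)) =
          ∑' K : ↥𝒦, μ (E ∩ (K : Set X)) := by
        exact tsum_subtype_eq_of_support_subset
          (f := fun K : ↥𝒦 => μ (E ∩ (K : Set X))) (s := S) (fun K hK => hK)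
      have hresid : μ (E \ B) = 0 := residual E hE S hScnt subset_rfl
      calc μ E = μ (E ∩ B) + μ (E \ B) := (measure_inter_add_diff E hBmeas).symm
        _ = μ (E ∩ B) := by rw [hresid, add_zero]
        _ = ∑' K : ↥𝒦, μ (E ∩ (K : Set X)) := by rw [hsum, htsub]
    · have htop : ∑' K : ↥𝒦, μ (E ∩ (K : Set X)) = ⊤ := by
        by_contra hne
        exact hScnt (by simpa [Function.support] using Summable.countable_support_ennreal hne)
      have hEtop : μ E = ⊤ := by
        by_contra hne
        exact hScnt (hcntE E hE hne)
      rw [hEtop, htop]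
  -- measurability criterion
  have L3 : ∀ E : Set X, (∀ K ∈ 𝒦, MeasurableSet (E ∩ K)) → MeasurableSet E := by
    intro E hEK
    refine h2 E fun F hF hFfin => ?_
    have hcnt := hcntE F hF hFfin.ne
    set S := {K : ↥𝒦 | μ (F ∩ (K : Set X)) ≠ 0} with hSdef
    set B : Set X := ⋃ K ∈ S, (K : Set X) with hBdef
    have hEF : E ∩ F = (⋃ K ∈ S, (E ∩ (K : Set X) ∩ F)) ∪ (E ∩ (F \ B)) := by
      ext x
      constructor
      · rintro ⟨hxE, hxF⟩
        by_cases hxB : x ∈ B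
        · obtain ⟨K, hKS, hxK⟩ := mem_iUnion₂.1 hxB
          exact Or.inl (mem_iUnion₂.2 ⟨K, hKS, ⟨hxE, hxK⟩, hxF⟩)
        · exact Or.inr ⟨hxE, hxF, hxB⟩
      · rintro (hx | hx)
        · obtain ⟨K, _, ⟨hxE, _⟩, hxF⟩ := mem_iUnion₂.1 hx
          exact ⟨hxE, hxF⟩
        · exact ⟨hx.1, hx.2.1⟩
    rw [hEF]
    refine MeasurableSet.union ?_ ?_
    · exact MeasurableSet.biUnion hcnt fun K _ => (hEK K K.2).inter hF
    · refine h1 _ (le_antisymm ?_ (zero_le))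
      calc μ (E ∩ (F \ B)) ≤ μ (F \ B) := measure_mono inter_subset_right
        _ = 0 := residual F hF S hcnt subset_rfl
  -- the complement of the family
  set X₀ : Set X := {x : X | ∀ K ∈ 𝒦, x ∉ K} with hX₀def
  have hX₀null : ∀ x : X, x ∈ X₀ → μ {x} = 0 := by
    intro x hx
    by_contra hne
    have hpos : 0 < μ {x} := pos_iff_ne_zero.mpr hne
    have hss : SelfSupp μ {x} := by
      intro U hU ⟨y, hyU, hy⟩
      have hxy : y = x := hy
      subst hxy
      have : U ∩ {y} = {y} := inter_eq_self_of_subset_right (singleton_subset_iff.2 hyU)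
      rw [this]; exact hpos
    have hdisj : ∀ K ∈ 𝒦, Disjoint K ({x} : Set X) :=
      fun K hK => disjoint_singleton_right.2 (hx K hK)
    have : ({x} : Set X) ∈ 𝒦 := Kmax {x} isCompact_singleton hss hpos hdisj
    exact hx {x} this rfl
  -- assemble the decomposition
  refine ⟨↥𝒦 ⊕ ↥X₀, Sum.elim (fun K => (K : Set X)) (fun x => {(x : X)}), ?_, ?_, ?_, ?_, ?_, ?_⟩
  · rintro (K | x)
    · exact measK K
    · exact measClosed isClosed_singleton
  · rintro (K | x) (L | y) hne
    · have hKL : K ≠ L := fun hco => hne (by rw [hco])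
      have : (K : Set X) ≠ (L : Set X) := fun hco => hKL (Subtype.coe_injective hco)
      exact Kdisj K.2 L.2 this
    · exact disjoint_singleton_right.2 (y.2 K K.2)
    · exact disjoint_singleton_left.2 (x.2 L L.2)
    · have hxy : x ≠ y := fun hco => hne (by rw [hco])
      exact disjoint_singleton.2 fun hco => hxy (Subtype.coe_injective hco)
  · ext x
    simp only [mem_iUnion, mem_univ, iff_true]
    by_cases hx : ∃ K ∈ 𝒦, x ∈ K
    · obtain ⟨K, hK, hxK⟩ := hx
      exact ⟨Sum.inl ⟨K, hK⟩, hxK⟩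
    · push_neg at hx
      exact ⟨Sum.inr ⟨x, hx⟩, rfl⟩
  · rintro (K | x)
    · exact cptFin K (Kgood K K.2).1
    · exact cptFin _ isCompact_singleton
  · intro E
    constructor
    · intro hall
      refine L3 E fun K hK => ?_
      exact hall (Sum.inl ⟨K, hK⟩)
    · rintro hE (K | x)
      · exact hE.inter (measK K)
      · exact hE.inter (measClosed isClosed_singleton)
  · intro E hE
    have hzero : ∀ x : ↥X₀, μ (E ∩ {(x : X)}) = 0 := fun x =>
      le_antisymm ((measure_mono inter_subset_right).trans (hX₀null x x.2).le) (zero_le)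
    have hsupp : Function.support
        (fun i : ↥𝒦 ⊕ ↥X₀ => μ (E ∩ Sum.elim (fun K : ↥𝒦 => (K : Set X)) (fun x : ↥X₀ => {(x : X)}) i))
        ⊆ Set.range (Sum.inl : ↥𝒦 → ↥𝒦 ⊕ ↥X₀) := by
      rintro (K | x) hmem
      · exact ⟨K, rfl⟩
      · exact absurd (hzero x) hmem
    rw [L2 E hE]
    rw [← tsum_subtype_eq_of_support_subset hsupp]
    rw [← (Equiv.ofInjective (Sum.inl : ↥𝒦 → ↥𝒦 ⊕ ↥X₀) Sum.inl_injective).tsum_eq]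
    rfl
end
end
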